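/- arXiv:2603.17630 — 8 statements merged into one kernel-verified Lean document; each statement's English description precedes it below -/
import Mathlib

section
/- Let G be a connected graph with n ≥ 2 vertices in which every vertex has degree at least 1, and let T be a spanning tree of G. Then the number of 1-out-directed graphs D in G with U(D) = T is exactly n - 1. -/
/-!
Write `f` for the out-neighbour map, so that `|V| = |E(T)| + 1`. The edge map `v ↦ {v, f v}` is
onto `E(T)`, so by pigeonhole `f` has a 2-cycle `a ⇄ b`. Measuring distances to `a`, every other
vertex must point to each neighbour closer to `a` (otherwise that neighbour would point back away
from `a`), so `f` is determined by the edge `ab`. Conversely, sending `a` to `b` and every other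
vertex one step towards `a` gives a map with no other 2-cycle, whose edge map is therefore
injective off `a`, hence onto `E(T)`. So the 1-out-directed graphs over `T` correspond to the
`|V| - 1` edges of `T`.
-/

namespace SimpleGraph

variable {V : Type*} {G T : SimpleGraph V} {f g : V → V} {a b v : V}

lemma Reachable.exists_adj_dist_lt (h : G.Reachable v a) (hva : v ≠ a) :
    ∃ w, G.Adj v w ∧ G.dist w a < G.dist v a := by
  obtain ⟨p, hp⟩ := h.exists_walk_length_eq_dist
  cases p with
  | nil => exact absurd rfl hva
  | cons hvw q =>
    simp only [Walk.length_cons] at hp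
    exact ⟨_, hvw, (dist_le q).trans_lt (by omega)⟩

/-- `f` is the out-neighbour map of a 1-out-directed graph `D` with `U(D) = T`. -/
structure IsOneOutOrientation (T : SimpleGraph V) (f : V → V) : Prop where
  adj_apply : ∀ v, T.Adj v (f v)
  apply_eq_or_apply_eq : ∀ ⦃x y⦄, T.Adj x y → f x = y ∨ f y = x

lemma adj_and_fromRel_eq_iff_isOneOutOrientation (hTG : T ≤ G) :
    ((∀ v, G.Adj v (f v)) ∧ fromRel (fun x y => f x = y) = T) ↔ T.IsOneOutOrientation f := by
  constructor
  · rintro ⟨hG, rfl⟩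
    exact ⟨fun v => fromRel_adj _ _ _ |>.2 ⟨(hG v).ne, Or.inl rfl⟩, fun x y hxy => hxy.2⟩
  · rintro ⟨hadj, hcover⟩
    refine ⟨fun v => hTG (hadj v), ?_⟩
    ext x y
    rw [fromRel_adj]
    refine ⟨?_, fun hxy => ⟨hxy.ne, hcover hxy⟩⟩
    rintro ⟨-, rfl | rfl⟩
    exacts [hadj x, (hadj y).symm]

namespace IsOneOutOrientation

variable (hT : T.Preconnected) (hf : T.IsOneOutOrientation f) (ha : f (f a) = a)
include hT hf ha

theorem apply_eq_of_dist_lt {v w : V} (hva : v ≠ a) (hvw : T.Adj v w)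
    (hlt : T.dist w a < T.dist v a) : f v = w := by
  rcases hf.apply_eq_or_apply_eq hvw with h | h
  · exact h
  by_cases hwa : w = a
  · subst hwa
    rw [← h, ha]
  obtain ⟨u, hwu, hu⟩ := (hT w a).exists_adj_dist_lt hwa
  have hwu' : f w = u := apply_eq_of_dist_lt hwa hwu hu
  rw [h] at hwu'
  subst hwu'
  omega
termination_by T.dist v a

theorem dist_apply_lt (hva : v ≠ a) : T.dist (f v) a < T.dist v a := by
  obtain ⟨w, hvw, hw⟩ := (hT v a).exists_adj_dist_lt hva
  rwa [hf.apply_eq_of_dist_lt hT ha hva hvw hw]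

theorem eq_or_eq_of_apply_apply_eq (hv : f (f v) = v) : v = a ∨ v = f a := by
  by_contra! hne
  have hfva : f v ≠ a := fun h => hne.2 (by rw [← h, hv])
  have := hf.dist_apply_lt hT ha hfva
  rw [hv] at this
  have := hf.dist_apply_lt hT ha hne.1
  omega

theorem eq_of_apply_eq (hg : T.IsOneOutOrientation g) (hga : g (g a) = a) (h : f a = g a) :
    f = g := by
  funext v
  by_cases hva : v = a
  · rwa [hva]
  obtain ⟨w, hvw, hw⟩ := (hT v a).exists_adj_dist_lt hva
  rw [hf.apply_eq_of_dist_lt hT ha hva hvw hw, hg.apply_eq_of_dist_lt hT hga hva hvw hw]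

end IsOneOutOrientation

namespace IsTree

variable [Finite V] (hT : T.IsTree)
include hT

theorem ncard_edgeSet_add_one : T.edgeSet.ncard + 1 = Nat.card V := by
  rw [← Nat.card_coe_set_eq]
  exact (isTree_iff_connected_and_card.1 hT).2

theorem exists_apply_apply_eq (hf : ∀ v, T.Adj v (f v)) : ∃ a, f (f a) = a := by
  have hlt : T.edgeSet.ncard < (Set.univ : Set V).ncard := by
    rw [Set.ncard_univ, ← hT.ncard_edgeSet_add_one]
    exact Nat.lt_succ_self _
  obtain ⟨x, -, y, -, hxy, hs⟩ := Set.exists_ne_map_eq_of_ncard_lt_of_maps_to hlt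
    (f := fun v => s(v, f v)) fun v _ => hf v
  rcases Sym2.eq_iff.1 hs with ⟨h, -⟩ | ⟨h₁, h₂⟩
  · exact absurd h hxy
  · exact ⟨x, by rw [h₂, h₁]⟩

/-- Since `|V \ {a}| = |E(T)|`, an injective edge map on `V \ {a}` is onto `E(T)`. -/
theorem isOneOutOrientation_of_apply_apply_eq (hf : ∀ v, T.Adj v (f v))
    (h2 : ∀ v, f (f v) = v → v = a ∨ f v = a) : T.IsOneOutOrientation f := by
  refine ⟨hf, fun x y hxy => ?_⟩
  set φ : V → Sym2 V := fun v => s(v, f v)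
  have hinj : Set.InjOn φ {a}ᶜ := by
    intro v hv w hw hs
    rcases Sym2.eq_iff.1 hs with ⟨h, -⟩ | ⟨h₁, h₂⟩
    · exact h
    · rcases h2 v (by rw [h₂, h₁]) with h | h
      exacts [absurd h hv, absurd (h₂ ▸ h) hw]
  have himage : φ '' {a}ᶜ = T.edgeSet := by
    refine Set.eq_of_subset_of_ncard_le (Set.image_subset_iff.2 fun v _ => hf v) ?_
    rw [hinj.ncard_image, Set.ncard_compl, Set.ncard_singleton,
      ← hT.ncard_edgeSet_add_one, Nat.add_sub_cancel]
  obtain ⟨v, -, hv⟩ := himage.symm ▸ (show s(x, y) ∈ T.edgeSet from hxy)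
  rcases Sym2.eq_iff.1 hv with ⟨rfl, rfl⟩ | ⟨rfl, rfl⟩
  exacts [Or.inl rfl, Or.inr rfl]

theorem exists_isOneOutOrientation (hab : T.Adj a b) :
    ∃ f, T.IsOneOutOrientation f ∧ f a = b ∧ f b = a := by
  classical
  choose g hg using fun v (hva : v ≠ a) => (hT.connected.preconnected v a).exists_adj_dist_lt hva
  let f v := if hva : v = a then b else g v hva
  have hdist {v} (hva : v ≠ a) : T.dist (f v) a < T.dist v a := by
    simpa only [f, dif_neg hva] using (hg v hva).2
  have hfb : f b = a := by
    have := hdist hab.ne'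
    rw [dist_eq_one_iff_adj.2 hab.symm, Nat.lt_one_iff,
      (hT.connected.preconnected _ _).dist_eq_zero_iff] at this
    exact this
  refine ⟨f, hT.isOneOutOrientation_of_apply_apply_eq (a := a) (fun v => ?_) fun v hv => ?_,
    dif_pos rfl, hfb⟩
  · by_cases hva : v = a
    · subst hva
      simpa only [f, dif_pos] using hab
    · simpa only [f, dif_neg hva] using (hg v hva).1
  · by_contra! hne
    have h₁ := hdist hne.1
    have h₂ := hdist hne.2
    rw [hv] at h₂
    omega

theorem ncard_setOf_isOneOutOrientation :
    {f | T.IsOneOutOrientation f}.ncard = T.edgeSet.ncard := by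
  have hpre := hT.connected.preconnected
  choose root hroot using fun f (hf : T.IsOneOutOrientation f) =>
    hT.exists_apply_apply_eq hf.adj_apply
  refine Set.ncard_congr (fun f hf => s(root f hf, f (root f hf))) (fun f hf => hf.adj_apply _)
    ?_ ?_
  · intro f g hf hg hs
    rcases Sym2.eq_iff.1 hs with ⟨h₁, h₂⟩ | ⟨h₁, h₂⟩
    · refine hf.eq_of_apply_eq hpre (hroot f hf) hg ?_ ?_
      · rw [h₁]; exact hroot g hg
      · rw [h₂, h₁]
    · refine hf.eq_of_apply_eq hpre (hroot f hf) hg ?_ ?_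
      · rw [h₁, hroot g hg, ← h₂, h₁]
      · rw [h₂, h₁, hroot g hg]
  · intro e he
    induction e using Sym2.ind with
    | _ x y =>
    obtain ⟨f, hf, hx, hy⟩ := hT.exists_isOneOutOrientation he
    refine ⟨f, hf, ?_⟩
    rcases hf.eq_or_eq_of_apply_apply_eq hpre (a := x) (by rw [hx, hy]) (hroot f hf) with h | h
    · rw [h, hx]
    · rw [h, hx, hy, Sym2.eq_swap]

end IsTree

end SimpleGraph

theorem count_one_out_directed_graphs_over_spanning_tree_general
    (V : Type) [Fintype V] (G : SimpleGraph V)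
    (T : SimpleGraph V) (hTle : T ≤ G) (hT : T.IsTree) :
    {f : V → V | (∀ v : V, G.Adj v (f v)) ∧
        SimpleGraph.fromRel (fun x y => f x = y) = T}.ncard = Fintype.card V - 1 := by
  have hset : {f : V → V | (∀ v : V, G.Adj v (f v)) ∧
      SimpleGraph.fromRel (fun x y => f x = y) = T} = {f | T.IsOneOutOrientation f} :=
    Set.ext fun _ => SimpleGraph.adj_and_fromRel_eq_iff_isOneOutOrientation hTle
  rw [hset, hT.ncard_setOf_isOneOutOrientation, ← Nat.card_eq_fintype_card,
    ← hT.ncard_edgeSet_add_one, Nat.add_sub_cancel]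

/-- Let `G` be a connected graph with `n ≥ 2` vertices in which every vertex has degree
at least `1`, and let `T` be a spanning tree of `G`. Then the number of 1-out-directed
graphs `D` in `G` with `U(D) = T` is exactly `n - 1`. -/
theorem count_one_out_directed_graphs_over_spanning_tree
    (V : Type) [Fintype V] [DecidableEq V] (G : SimpleGraph V) [DecidableRel G.Adj]
    (hn : 2 ≤ Fintype.card V) (hG : G.Connected) (hdeg : ∀ v : V, 1 ≤ G.degree v)
    (T : SimpleGraph V) (hTle : T ≤ G) (hT : T.IsTree) :
    {f : V → V | (∀ v : V, G.Adj v (f v)) ∧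
        SimpleGraph.fromRel (fun x y => f x = y) = T}.ncard = Fintype.card V - 1 :=
  count_one_out_directed_graphs_over_spanning_tree_general V G T hTle hT
end

section
/- Let G be a connected graph with n ≥ 2 vertices, let d(G) := ∏_{v ∈ V(G)} d_G(v), and let 𝒟 be a uniformly random 1-out-directed graph in G (i.e., obtained by independently choosing for each vertex a uniformly random neighbour as its unique out-neighbour). Then for every spanning tree T of G, ℙ(U(𝒟) = T) = (n-1)/d(G). In particular, conditioned on the event that U(𝒟) is a tree, U(𝒟) is a uniformly random spanning tree of G. -/
/-!
Let `T` be a tree on `n` vertices and `f` a choice of a `T`-neighbour for every vertex whose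
underlying graph is `T`. Since `T` has only `n - 1` edges, some edge `{a, f a}` is chosen from
both ends, and then every other vertex must point to its neighbour closer to `a`; in particular
`{a, f a}` is the only such edge. Conversely every edge `{a, b}` arises this way. Double counting
the pairs `(f, a)` with `f (f a) = a` gives `2 · #f = ∑ deg_T = 2 (n - 1)`. There are `∏ d_G(v)`
1-out-directed graphs in `G` in total, and each spanning tree is hit by exactly `n - 1` of them.
-/

namespace SimpleGraph

variable {V : Type*} {G : SimpleGraph V} {a v w w' : V}

lemma Connected.exists_adj_dist_add_one_eq (hG : G.Connected) (hv : v ≠ a) :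
    ∃ w, G.Adj v w ∧ G.dist a w + 1 = G.dist a v := by
  obtain ⟨p, hp⟩ := hG.exists_walk_length_eq_dist v a
  have hp_nil : ¬p.Nil := Walk.not_nil_of_ne hv
  refine ⟨p.snd, p.adj_snd hp_nil, ?_⟩
  have h_tail : G.dist p.snd a ≤ p.tail.length := dist_le _
  have h_len : p.tail.length + 1 = p.length := p.length_tail_add_one hp_nil
  have h_tri : G.dist v a ≤ G.dist v p.snd + G.dist p.snd a := hG.dist_triangle
  rw [dist_eq_one_iff_adj.2 (p.adj_snd hp_nil)] at h_tri
  rw [dist_comm (u := a), dist_comm (u := a)]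
  omega

lemma IsAcyclic.eq_of_adj_of_dist_add_one_eq (hG : G.IsAcyclic) (hw : G.Adj v w)
    (hw' : G.Adj v w') (h : G.dist a w + 1 = G.dist a v) (h' : G.dist a w' + 1 = G.dist a v) :
    w = w' := by
  have hreach : G.Reachable a v := Reachable.of_dist_ne_zero (by omega)
  obtain ⟨q, hq⟩ := (hreach.trans hw.reachable).exists_walk_length_eq_dist
  obtain ⟨q', hq'⟩ := (hreach.trans hw'.reachable).exists_walk_length_eq_dist
  have hpath : (q.concat hw.symm).IsPath := Walk.isPath_of_length_eq_dist _ (by simp [hq, h])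
  have hpath' : (q'.concat hw'.symm).IsPath := Walk.isPath_of_length_eq_dist _ (by simp [hq', h'])
  have := congrArg Subtype.val ((hG.subsingleton_path a v).elim ⟨_, hpath⟩ ⟨_, hpath'⟩)
  exact (Walk.concat_inj this).1

/-- `f` is a 1-out-directed graph in `G` whose underlying graph is all of `G`
(see `isOneOutCover_iff`). -/
structure IsOneOutCover (G : SimpleGraph V) (f : V → V) : Prop where
  adj : ∀ v, G.Adj v (f v)
  cover : ∀ u w, G.Adj u w → f u = w ∨ f w = u

lemma isOneOutCover_iff {f : V → V} :
    G.IsOneOutCover f ↔ (∀ v, G.Adj v (f v)) ∧ fromRel (fun x y => f x = y) = G := by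
  refine ⟨fun hf => ⟨hf.adj, ?_⟩, fun ⟨hadj, hf⟩ => ⟨hadj, fun u w huw => ?_⟩⟩
  · ext u w
    rw [fromRel_adj]
    refine ⟨?_, fun huw => ⟨huw.ne, hf.cover u w huw⟩⟩
    rintro ⟨-, rfl | rfl⟩
    exacts [hf.adj u, (hf.adj w).symm]
  · rw [← hf, fromRel_adj] at huw
    exact huw.2

namespace IsOneOutCover

variable {f g : V → V}

lemma dist_apply_add_one (hG : G.Connected) (hf : G.IsOneOutCover f) (ha : f (f a) = a)
    (hv : v ≠ a) : G.dist a (f v) + 1 = G.dist a v := by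
  induction hd : G.dist a v using Nat.strong_induction_on generalizing v with
  | _ d ih =>
  obtain ⟨w, hvw, hw⟩ := hG.exists_adj_dist_add_one_eq hv
  -- if `w` points back to `v` instead, the induction hypothesis forces `w = a` and `v = f a`
  rcases hf.cover v w hvw with rfl | hwv
  · rw [hw, hd]
  by_cases hwa : w = a
  · subst hwa
    rw [← hwv, ha, hw, hd]
  · have := ih _ (by omega) hwa rfl
    rw [hwv] at this
    omega

lemma apply_apply_eq_self_iff (hG : G.Connected) (hf : G.IsOneOutCover f) (ha : f (f a) = a) :
    f (f v) = v ↔ v = a ∨ v = f a := by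
  refine ⟨fun hv => ?_, ?_⟩
  · by_contra! h
    have hfv : f v ≠ a := fun hfv => h.2 (by rw [← hv, hfv])
    have h1 := hf.dist_apply_add_one hG ha h.1
    have h2 := hf.dist_apply_add_one hG ha hfv
    rw [hv] at h2
    omega
  · rintro (rfl | rfl)
    exacts [ha, by rw [ha]]

lemma eq_of_apply_eq (hG : G.Connected) (hf : G.IsOneOutCover f) (hg : G.IsOneOutCover g)
    (hfa : f (f a) = a) (hga : g (g a) = a) (h : f a = g a) : f = g := by
  funext v
  rcases eq_or_ne v a with rfl | hva
  · exact h
  rcases hg.cover v (f v) (hf.adj v) with hv | hv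
  · exact hv.symm
  by_cases hfv : f v = a
  · have hv' : v = f a := by rw [h, ← hv, hfv]
    rw [hv', hfa, h, hga]
  · have h1 := hg.dist_apply_add_one hG hga hfv
    have h2 := hf.dist_apply_add_one hG hfa hva
    rw [hv] at h1
    omega

end IsOneOutCover

lemma IsTree.exists_apply_apply_eq_self [Finite V] (hT : G.IsTree) {f : V → V}
    (hf : ∀ v, G.Adj v (f v)) : ∃ a, f (f a) = a := by
  have := Fintype.ofFinite V
  classical
  have hcard : Fintype.card G.edgeSet < Fintype.card V := by
    have := hT.card_edgeFinset
    rw [← edgeFinset_card]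
    omega
  obtain ⟨u, v, huv, he⟩ := Fintype.exists_ne_map_eq_of_card_lt
    (fun v => (⟨s(v, f v), hf v⟩ : G.edgeSet)) hcard
  obtain ⟨rfl, -⟩ | ⟨rfl, hu⟩ := Sym2.eq_iff.1 (congrArg Subtype.val he)
  · exact (huv rfl).elim
  · exact ⟨v, hu⟩

open Classical in
noncomputable def Connected.orientTowards (hG : G.Connected) (a b v : V) : V :=
  if hv : v = a then b else (hG.exists_adj_dist_add_one_eq hv).choose

namespace Connected

variable {b : V} (hG : G.Connected)

lemma orientTowards_self : hG.orientTowards a b a = b := dif_pos rfl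

lemma orientTowards_of_ne (hv : v ≠ a) :
    G.Adj v (hG.orientTowards a b v) ∧ G.dist a (hG.orientTowards a b v) + 1 = G.dist a v := by
  rw [orientTowards, dif_neg hv]
  exact (hG.exists_adj_dist_add_one_eq hv).choose_spec

lemma orientTowards_apply_self (hab : G.Adj a b) :
    hG.orientTowards a b (hG.orientTowards a b a) = a := by
  rw [orientTowards_self]
  have h := (hG.orientTowards_of_ne (b := b) hab.ne').2
  rw [dist_eq_one_iff_adj.2 hab, Nat.add_eq_right, hG.dist_eq_zero_iff] at h
  exact h.symm

end Connected

lemma IsTree.isOneOutCover_orientTowards (hT : G.IsTree) {b : V} (hab : G.Adj a b) :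
    G.IsOneOutCover (hT.connected.orientTowards a b) := by
  have hT' := hT.connected
  refine ⟨fun v => ?_, fun u w huw => ?_⟩
  · rcases eq_or_ne v a with rfl | hv
    · rwa [hT'.orientTowards_self]
    · exact (hT'.orientTowards_of_ne hv).1
  have key : ∀ {u w}, G.Adj u w → G.dist a u = G.dist a w + 1 → hT'.orientTowards a b u = w := by
    intro u w huw h
    have hu : u ≠ a := by rintro rfl; simp at h
    obtain ⟨hadj, hdist⟩ := hT'.orientTowards_of_ne (b := b) hu
    exact hT.isAcyclic.eq_of_adj_of_dist_add_one_eq hadj huw hdist h.symm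
  rcases hT.dist_eq_dist_add_one_of_adj a huw with h | h
  exacts [Or.inl (key huw h), Or.inr (key huw.symm h)]

lemma IsOneOutCover.ncard_setOf_apply_apply_eq_self [Finite V] (hT : G.IsTree) {f : V → V}
    (hf : G.IsOneOutCover f) : {a | f (f a) = a}.ncard = 2 := by
  obtain ⟨a, ha⟩ := hT.exists_apply_apply_eq_self hf.adj
  have : {a | f (f a) = a} = {a, f a} := by
    ext v
    exact hf.apply_apply_eq_self_iff hT.connected ha
  rw [this, Set.ncard_pair (hf.adj a).ne]

lemma IsTree.ncard_setOf_isOneOutCover_and_apply_apply_eq (hT : G.IsTree) (a : V) :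
    {f | G.IsOneOutCover f ∧ f (f a) = a}.ncard = (G.neighborSet a).ncard := by
  refine Set.ncard_congr (fun f _ => f a) (fun f hf => hf.1.adj a)
    (fun f g hf hg h => hf.1.eq_of_apply_eq hT.connected hg.1 hf.2 hg.2 h) fun b hab => ?_
  exact ⟨_, ⟨hT.isOneOutCover_orientTowards hab, hT.connected.orientTowards_apply_self hab⟩,
    hT.connected.orientTowards_self⟩

lemma IsTree.ncard_setOf_isOneOutCover [Finite V] (hT : G.IsTree) :
    {f | G.IsOneOutCover f}.ncard = Nat.card V - 1 := by
  classical
  have := Fintype.ofFinite V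
  rw [Set.ncard_eq_toFinset_card', Nat.card_eq_fintype_card]
  set S := {f | G.IsOneOutCover f}.toFinset
  have hdouble := Finset.sum_card_bipartiteAbove_eq_sum_card_bipartiteBelow
    (s := S) (t := Finset.univ) (r := fun f a => f (f a) = a)
  have hleft : ∀ f ∈ S, (Finset.univ.bipartiteAbove (fun f a => f (f a) = a) f).card = 2 := by
    intro f hf
    rw [Set.mem_toFinset] at hf
    rw [← hf.ncard_setOf_apply_apply_eq_self hT, Set.ncard_eq_toFinset_card']
    simp [Finset.bipartiteAbove]
  have hright : ∀ a, (S.bipartiteBelow (fun f a => f (f a) = a) a).card = G.degree a := by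
    intro a
    rw [← card_neighborSet_eq_degree, ← Nat.card_eq_fintype_card, Nat.card_coe_set_eq,
      ← hT.ncard_setOf_isOneOutCover_and_apply_apply_eq a, Set.ncard_eq_toFinset_card']
    simp [Finset.bipartiteBelow, S, Finset.filter_filter]
  rw [Finset.sum_congr rfl hleft, Finset.sum_congr rfl (fun a _ => hright a),
    sum_degrees_eq_twice_card_edges, Finset.sum_const, smul_eq_mul] at hdouble
  have := hT.card_edgeFinset
  omega

lemma ncard_setOf_forall_adj [Fintype V] [DecidableRel G.Adj] :
    {f : V → V | ∀ v, G.Adj v (f v)}.ncard = ∏ v, G.degree v := by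
  classical
  have : {f : V → V | ∀ v, G.Adj v (f v)} =
      (Fintype.piFinset fun v => G.neighborFinset v : Set (V → V)) := by
    ext f
    simp
  rw [this, Set.ncard_coe_finset, Fintype.card_piFinset]
  simp

lemma fromRel_le_of_forall_adj {f : V → V} (hf : ∀ v, G.Adj v (f v)) :
    fromRel (fun x y => f x = y) ≤ G := by
  rintro x y ⟨-, rfl | rfl⟩
  exacts [hf x, (hf y).symm]

lemma setOf_forall_adj_and_fromRel_eq {T : SimpleGraph V} (hTG : T ≤ G) :
    {f : V → V | (∀ v, G.Adj v (f v)) ∧ fromRel (fun x y => f x = y) = T} =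
      {f | T.IsOneOutCover f} := by
  ext f
  rw [Set.mem_ofPred_eq, Set.mem_ofPred_eq, isOneOutCover_iff]
  refine ⟨fun ⟨hf, hT⟩ => ⟨fun v => ?_, hT⟩, fun ⟨hf, hT⟩ => ⟨fun v => hTG (hf v), hT⟩⟩
  rw [← hT, fromRel_adj]
  exact ⟨(hf v).ne, Or.inl rfl⟩

lemma ncard_setOf_forall_adj_and_fromRel_isTree [Finite V] :
    {f : V → V | (∀ v, G.Adj v (f v)) ∧ (fromRel (fun x y => f x = y)).IsTree}.ncard =
      {H | H ≤ G ∧ H.IsTree}.ncard * (Nat.card V - 1) := by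
  classical
  have := Fintype.ofFinite V
  rw [Set.ncard_eq_toFinset_card', Set.ncard_eq_toFinset_card',
    Finset.card_eq_sum_card_fiberwise (f := fun f : V → V => fromRel (fun x y => f x = y))
      (t := {H | H ≤ G ∧ H.IsTree}.toFinset) fun f hf => by
        simp only [Finset.mem_coe, Set.mem_toFinset, Set.mem_ofPred_eq] at hf ⊢
        exact ⟨fromRel_le_of_forall_adj hf.1, hf.2⟩,
    ← Finset.sum_const_nat fun H hH => ?_]
  simp only [Set.mem_toFinset, Set.mem_ofPred_eq] at hH
  rw [← (hH.2).ncard_setOf_isOneOutCover, ← setOf_forall_adj_and_fromRel_eq hH.1,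
    ← Set.ncard_coe_finset]
  congr 1
  ext f
  simp +contextual [hH.2]

end SimpleGraph

theorem uniform_one_out_directed_graph_gives_uniform_spanning_tree_general
    (V : Type) [Fintype V] (G : SimpleGraph V) [DecidableRel G.Adj]
    (hn : 2 ≤ Fintype.card V) :
    (∀ T : SimpleGraph V, T ≤ G → T.IsTree →
      ({f : V → V | (∀ v : V, G.Adj v (f v)) ∧
            SimpleGraph.fromRel (fun x y => f x = y) = T}.ncard : ℝ) /
          ({f : V → V | ∀ v : V, G.Adj v (f v)}.ncard : ℝ) =
        ((Fintype.card V : ℝ) - 1) / (∏ v : V, (G.degree v : ℝ))) ∧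
    (∀ T : SimpleGraph V, T ≤ G → T.IsTree →
      ({f : V → V | (∀ v : V, G.Adj v (f v)) ∧
            SimpleGraph.fromRel (fun x y => f x = y) = T}.ncard : ℝ) /
          ({f : V → V | (∀ v : V, G.Adj v (f v)) ∧
            (SimpleGraph.fromRel (fun x y => f x = y)).IsTree}.ncard : ℝ) =
        1 / ({H : SimpleGraph V | H ≤ G ∧ H.IsTree}.ncard : ℝ)) := by
  have hcount : ∀ T : SimpleGraph V, T ≤ G → T.IsTree →
      {f : V → V | (∀ v, G.Adj v (f v)) ∧ SimpleGraph.fromRel (fun x y => f x = y) = T}.ncard =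
        Fintype.card V - 1 := fun T hTG hT => by
    rw [SimpleGraph.setOf_forall_adj_and_fromRel_eq hTG, hT.ncard_setOf_isOneOutCover,
      Nat.card_eq_fintype_card]
  have hcast : ((Fintype.card V - 1 : ℕ) : ℝ) = Fintype.card V - 1 := by
    rw [Nat.cast_sub (by omega), Nat.cast_one]
  refine ⟨fun T hTG hT => ?_, fun T hTG hT => ?_⟩
  · rw [hcount T hTG hT, SimpleGraph.ncard_setOf_forall_adj, hcast, Nat.cast_prod]
  · have hpos : ((Fintype.card V - 1 : ℕ) : ℝ) ≠ 0 := Nat.cast_ne_zero.2 (by omega)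
    rw [hcount T hTG hT, SimpleGraph.ncard_setOf_forall_adj_and_fromRel_isTree,
      Nat.card_eq_fintype_card, Nat.cast_mul, div_mul_cancel_right₀ hpos, one_div]

/-- Let `G` be a connected graph with `n ≥ 2` vertices and `d(G) = ∏_v d_G(v)`, and let
`𝒟` be a uniformly random 1-out-directed graph in `G`. Then for every spanning tree `T`
of `G`, `ℙ(U(𝒟) = T) = (n-1)/d(G)`. In particular, conditioned on the event that
`U(𝒟)` is a tree, `U(𝒟)` is a uniformly random spanning tree of `G`. -/
theorem uniform_one_out_directed_graph_gives_uniform_spanning_tree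
    (V : Type) [Fintype V] [DecidableEq V] (G : SimpleGraph V) [DecidableRel G.Adj]
    (hn : 2 ≤ Fintype.card V) (hG : G.Connected) :
    (∀ T : SimpleGraph V, T ≤ G → T.IsTree →
      ({f : V → V | (∀ v : V, G.Adj v (f v)) ∧
            SimpleGraph.fromRel (fun x y => f x = y) = T}.ncard : ℝ) /
          ({f : V → V | ∀ v : V, G.Adj v (f v)}.ncard : ℝ) =
        ((Fintype.card V : ℝ) - 1) / (∏ v : V, (G.degree v : ℝ))) ∧
    (∀ T : SimpleGraph V, T ≤ G → T.IsTree →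
      ({f : V → V | (∀ v : V, G.Adj v (f v)) ∧
            SimpleGraph.fromRel (fun x y => f x = y) = T}.ncard : ℝ) /
          ({f : V → V | (∀ v : V, G.Adj v (f v)) ∧
            (SimpleGraph.fromRel (fun x y => f x = y)).IsTree}.ncard : ℝ) =
        1 / ({H : SimpleGraph V | H ≤ G ∧ H.IsTree}.ncard : ℝ)) :=
  uniform_one_out_directed_graph_gives_uniform_spanning_tree_general V G hn
end

section
/- Let G be a graph with n vertices and minimum degree at least 2, and let 𝒟 be a uniformly random 1-out-directed graph in G (obtained by independently choosing for each vertex a uniformly random neighbour as its unique out-neighbour). Then the expected number of vertices of 𝒟 with in-degree 0 is at least n/4. -/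
/-! A vertex `v` is a leaf with probability `p v = ∏_{u ∼ v} (1 - 1/d(u))`, the choices being
independent. Each `u` contributes the factor `1 - 1/d(u)` to exactly `d(u)` of these products, so
`∏_v p v = ∏_u (1 - 1/d(u))^d(u) ≥ 4^(-n)`, because `(1 - 1/d)^d ≥ 1/4` for `d ≥ 2` (Bernoulli's
inequality with exponent `d/2`). By AM–GM the expected number `∑_v p v` of leaves is at least
`n / 4`. Only the fact that each vertex has at least two choices matters. -/

open Finset

namespace Real

theorem card_mul_le_sum_of_pow_card_le_prod {ι : Type*} (s : Finset ι) {x : ι → ℝ} {c : ℝ}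
    (hc : 0 ≤ c) (hx : ∀ i ∈ s, 0 ≤ x i) (h : c ^ #s ≤ ∏ i ∈ s, x i) :
    #s * c ≤ ∑ i ∈ s, x i := by
  rcases s.eq_empty_or_nonempty with rfl | hs
  · simp
  have hn : (0 : ℝ) < #s := by exact_mod_cast hs.card_pos
  have amgm := geom_mean_le_arith_mean s (fun _ => 1) x (fun _ _ => zero_le_one)
    (by simpa using hn) hx
  simp only [rpow_one, sum_const, nsmul_eq_mul, mul_one, one_mul] at amgm
  rw [← le_div_iff₀' hn]
  calc c = (c ^ #s) ^ (#s : ℝ)⁻¹ := (pow_rpow_inv_natCast hc hs.card_pos.ne').symm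
    _ ≤ (∏ i ∈ s, x i) ^ (#s : ℝ)⁻¹ := rpow_le_rpow (by positivity) h (by positivity)
    _ ≤ (∑ i ∈ s, x i) / #s := amgm

theorem one_div_four_le_one_sub_inv_pow {d : ℕ} (hd : 2 ≤ d) :
    (1 / 4 : ℝ) ≤ (1 - (d : ℝ)⁻¹) ^ d := by
  have hd' : (2 : ℝ) ≤ d := by exact_mod_cast hd
  have hbase : 0 ≤ 1 - (d : ℝ)⁻¹ := by
    rw [sub_nonneg]; exact inv_le_one_of_one_le₀ (by linarith)
  have bernoulli := one_add_mul_self_le_rpow_one_add (s := -(d : ℝ)⁻¹) (p := d / 2)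
    (by rw [neg_le_neg_iff]; exact inv_le_one_of_one_le₀ (by linarith)) (by linarith)
  have half : 1 + (d : ℝ) / 2 * -(d : ℝ)⁻¹ = 1 / 2 := by field_simp; ring
  rw [half, ← sub_eq_add_neg] at bernoulli
  calc (1 / 4 : ℝ) = (1 / 2) ^ 2 := by norm_num
    _ ≤ ((1 - (d : ℝ)⁻¹) ^ ((d : ℝ) / 2)) ^ 2 := pow_le_pow_left₀ (by norm_num) bernoulli 2
    _ = (1 - (d : ℝ)⁻¹) ^ d := by
      rw [← rpow_natCast _ 2, ← rpow_mul hbase, ← rpow_natCast]; norm_num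

end Real

theorem Finset.prod_card_erase_div_card {α : Type*} [Fintype α] [DecidableEq α] {s : Finset α}
    (hs : s.Nonempty) : ∏ a, (#(s.erase a) : ℝ) / #s = (1 - (#s : ℝ)⁻¹) ^ #s := by
  have hs' : (#s : ℝ) ≠ 0 := by exact_mod_cast hs.card_pos.ne'
  have factor : ∀ a, (#(s.erase a) : ℝ) / #s = if a ∈ s then 1 - (#s : ℝ)⁻¹ else 1 := by
    intro a
    split_ifs with ha
    · rw [card_erase_of_mem ha, Nat.cast_sub hs.card_pos, sub_div, div_self hs', Nat.cast_one,
        one_div]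
    · rw [erase_eq_of_notMem ha, div_self hs']
  simp_rw [factor]
  rw [prod_ite_mem, univ_inter, prod_const]

section ChoiceFunctions

variable {α : Type*} [Fintype α] [DecidableEq α] (t : α → Finset α)

theorem Fintype.filter_piFinset_forall_ne (a : α) :
    (Fintype.piFinset t).filter (fun f => ∀ x, f x ≠ a) =
      Fintype.piFinset fun x => (t x).erase a := by
  ext f
  simp only [mem_filter, Fintype.mem_piFinset, mem_erase]
  exact ⟨fun ⟨hf, hne⟩ x => ⟨hne x, hf x⟩, fun h => ⟨fun x => (h x).2, fun x => (h x).1⟩⟩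

theorem Fintype.sum_piFinset_ncard_setOf_forall_ne :
    ∑ f ∈ Fintype.piFinset t, {a | ∀ x, f x ≠ a}.ncard = ∑ a, ∏ x, #((t x).erase a) := by
  have ncard_eq : ∀ f : α → α, {a | ∀ x, f x ≠ a}.ncard = #(univ.filter fun a => ∀ x, f x ≠ a) :=
    fun f => by rw [Set.ncard_eq_toFinset_card', Set.toFinset_ofPred]
  simp_rw [ncard_eq]
  have := sum_card_bipartiteAbove_eq_sum_card_bipartiteBelow (fun (f : α → α) a => ∀ x, f x ≠ a)
    (s := Fintype.piFinset t) (t := univ)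
  simp only [bipartiteAbove, bipartiteBelow, filter_piFinset_forall_ne, card_piFinset] at this
  exact this

theorem Fintype.card_div_four_le_sum_ncard_div_card_piFinset (ht : ∀ x, 2 ≤ #(t x)) :
    (Fintype.card α : ℝ) / 4 ≤
      (∑ f ∈ Fintype.piFinset t, ({a | ∀ x, f x ≠ a}.ncard : ℝ)) / #(Fintype.piFinset t) := by
  set p : α → ℝ := fun a => ∏ x, (#((t x).erase a) : ℝ) / #(t x)
  have mean_eq : (∑ f ∈ Fintype.piFinset t, ({a | ∀ x, f x ≠ a}.ncard : ℝ)) /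
      #(Fintype.piFinset t) = ∑ a, p a := by
    rw [← Nat.cast_sum, sum_piFinset_ncard_setOf_forall_ne, card_piFinset]
    push_cast
    simp only [sum_div, p, prod_div_distrib]
  have prod_p : (1 / 4 : ℝ) ^ Fintype.card α ≤ ∏ a, p a := by
    calc (1 / 4 : ℝ) ^ Fintype.card α = ∏ _x : α, (1 / 4 : ℝ) := by simp
      _ ≤ ∏ x, (1 - (#(t x) : ℝ)⁻¹) ^ #(t x) :=
        prod_le_prod (fun _ _ => by norm_num) fun x _ => Real.one_div_four_le_one_sub_inv_pow (ht x)
      _ = ∏ a, p a := by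
        rw [prod_comm]
        exact Finset.prod_congr rfl fun x _ =>
          (prod_card_erase_div_card (Finset.card_pos.1 (by linarith [ht x]))).symm
  have amgm := Real.card_mul_le_sum_of_pow_card_le_prod univ (by norm_num)
    (fun a _ => prod_nonneg fun x _ => by positivity) prod_p
  rw [card_univ] at amgm
  rw [mean_eq]
  linarith

end ChoiceFunctions

/-- Let `G` be a graph with `n` vertices and minimum degree at least `2`, and let `𝒟` be
a uniformly random 1-out-directed graph in `G`. Then the expected number of vertices of
`𝒟` with in-degree `0` is at least `n/4`. -/
theorem expected_number_in_degree_zero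
    (V : Type) [Fintype V] [DecidableEq V] (G : SimpleGraph V) [DecidableRel G.Adj]
    (hdeg : ∀ u : V, 2 ≤ G.degree u) :
    (Fintype.card V : ℝ) / 4 ≤
      (∑ f ∈ Finset.univ.filter (fun f : V → V => ∀ u : V, G.Adj u (f u)),
          (({v : V | ∀ u : V, f u ≠ v}.ncard : ℝ))) /
        ((Finset.univ.filter (fun f : V → V => ∀ u : V, G.Adj u (f u))).card : ℝ) := by
  have out_maps : univ.filter (fun f : V → V => ∀ u, G.Adj u (f u)) =
      Fintype.piFinset fun u => G.neighborFinset u := by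
    ext f; simp
  rw [out_maps]
  exact Fintype.card_div_four_le_sum_ncard_div_card_piFinset (fun u => G.neighborFinset u)
    fun u => (G.card_neighborFinset_eq_degree u).symm ▸ hdeg u
end

section
/- Let G be a graph with n vertices and minimum degree at least 2, and let 𝒟 be a uniformly random 1-out-directed graph in G (obtained by independently choosing for each vertex a uniformly random neighbour as its unique out-neighbour). Then ℙ(𝒟 has at most n/8 vertices of in-degree 0) ≤ e^{-n/32}. -/
open Finset

set_option linter.unusedSectionVars false
set_option linter.unnecessarySeqFocus false
set_option maxHeartbeats 1600000

namespace FewLeavesAux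

variable {V : Type} [Fintype V] [DecidableEq V]


lemma zeroOne (wt : V → ℝ) (h0 : ∀ v, 0 ≤ wt v) (h1 : ∑ v, wt v = 1)
    (S₁ S₂ : Finset V) (hd : Disjoint S₁ S₂) (Φ Ψ : V → ℝ) (a b : ℝ)
    (haΦ : ∀ w, a ≤ Φ w) (hac : ∀ w ∉ S₁, Φ w = a)
    (hbΨ : ∀ w, b ≤ Ψ w) (hbc : ∀ w ∉ S₂, Ψ w = b) :
    ∑ w, wt w * (Φ w * Ψ w) ≤ (∑ w, wt w * Φ w) * (∑ w, wt w * Ψ w) := by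
  have key : ∀ w, Φ w * Ψ w = a * Ψ w + Φ w * b - a * b := by
    intro w
    by_cases hw : w ∈ S₁
    · rw [hbc w (Finset.disjoint_left.mp hd hw)]; ring
    · rw [hac w hw]; ring
  have hp : a ≤ ∑ w, wt w * Φ w := by
    calc a = ∑ w, wt w * a := by rw [← Finset.sum_mul, h1, one_mul]
    _ ≤ _ := Finset.sum_le_sum (fun w _ => mul_le_mul_of_nonneg_left (haΦ w) (h0 w))
  have hq : b ≤ ∑ w, wt w * Ψ w := by
    calc b = ∑ w, wt w * b := by rw [← Finset.sum_mul, h1, one_mul]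
    _ ≤ _ := Finset.sum_le_sum (fun w _ => mul_le_mul_of_nonneg_left (hbΨ w) (h0 w))
  have expand : ∑ w, wt w * (Φ w * Ψ w)
      = a * (∑ w, wt w * Ψ w) + (∑ w, wt w * Φ w) * b - a * b := by
    rw [Finset.mul_sum, Finset.sum_mul]
    rw [show a * b = (∑ w, wt w * a * b) by rw [← Finset.sum_mul, ← Finset.sum_mul, h1]; ring]
    rw [← Finset.sum_add_distrib, ← Finset.sum_sub_distrib]
    exact Finset.sum_congr rfl fun w _ => by rw [key w]; ring
  rw [expand]
  nlinarith [mul_nonneg (sub_nonneg.2 hp) (sub_nonneg.2 hq)]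

lemma symm_apply_ne {ι : Type} [DecidableEq ι] (i₀ : ι) (w : V) (y : {j // j ≠ i₀} → V)
    (j : ι) (h : j ≠ i₀) : (Equiv.funSplitAt i₀ V).symm (w, y) j = y ⟨j, h⟩ := by
  rw [Equiv.funSplitAt_symm_apply, dif_neg h]

lemma symm_apply_eq {ι : Type} [DecidableEq ι] (i₀ : ι) (w : V) (y : {j // j ≠ i₀} → V) :
    (Equiv.funSplitAt i₀ V).symm (w, y) i₀ = w := by
  rw [Equiv.funSplitAt_symm_apply, dif_pos rfl]

lemma image_symm (ι : Type) [Fintype ι] [DecidableEq ι] (i₀ : ι) (w : V)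
    (y : {j // j ≠ i₀} → V) :
    image ((Equiv.funSplitAt i₀ V).symm (w, y)) univ = insert w (image y univ) := by
  ext v
  simp only [mem_image, mem_insert, mem_univ, true_and]
  constructor
  · rintro ⟨j, rfl⟩
    by_cases h : j = i₀
    · subst h; left; rw [symm_apply_eq]
    · right; exact ⟨⟨j, h⟩, (symm_apply_ne i₀ w y j h).symm⟩
  · rintro (rfl | ⟨j, rfl⟩)
    · exact ⟨i₀, symm_apply_eq i₀ v y⟩
    · exact ⟨j.1, symm_apply_ne i₀ w y j.1 j.2⟩

lemma prod_symm (ι : Type) [Fintype ι] [DecidableEq ι] (i₀ : ι) (wt : ι → V → ℝ) (w : V)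
    (y : {j // j ≠ i₀} → V) :
    ∏ i, wt i ((Equiv.funSplitAt i₀ V).symm (w, y) i)
      = wt i₀ w * ∏ j : {j // j ≠ i₀}, wt j.1 (y j) := by
  rw [Fintype.prod_eq_mul_prod_compl i₀, symm_apply_eq]
  congr 1
  rw [Finset.prod_subtype ({i₀}ᶜ : Finset ι) (p := fun j => j ≠ i₀) (by simp)
    (fun j => wt j ((Equiv.funSplitAt i₀ V).symm (w, y) j))]
  exact Finset.prod_congr rfl fun j _ => by rw [symm_apply_ne i₀ w y j.1 j.2]

lemma split_sum {ι : Type} [Fintype ι] [DecidableEq ι] (i₀ : ι) (g : (ι → V) → ℝ) :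
    ∑ x : ι → V, g x
      = ∑ w : V, ∑ y : {j // j ≠ i₀} → V, g ((Equiv.funSplitAt i₀ V).symm (w, y)) := by
  rw [← Equiv.sum_comp (Equiv.funSplitAt i₀ V).symm g, Fintype.sum_prod_type]

lemma na : ∀ (n : ℕ) (ι : Type) [Fintype ι] [DecidableEq ι], Fintype.card ι = n →
    ∀ (wt : ι → V → ℝ), (∀ i v, 0 ≤ wt i v) → (∀ i, ∑ v, wt i v = 1) →
    ∀ (S₁ S₂ : Finset V), Disjoint S₁ S₂ →
    ∀ (φ ψ : Finset V → ℝ), (∀ A B, A ⊆ B → φ A ≤ φ B) → (∀ A B, A ⊆ B → ψ A ≤ ψ B) →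
    (∀ B, φ (B ∩ S₁) = φ B) → (∀ B, ψ (B ∩ S₂) = ψ B) →
    ∑ x : ι → V, (∏ i, wt i (x i)) * (φ (image x univ) * ψ (image x univ))
      ≤ (∑ x : ι → V, (∏ i, wt i (x i)) * φ (image x univ)) *
        (∑ x : ι → V, (∏ i, wt i (x i)) * ψ (image x univ)) := by
  intro n
  induction n with
  | zero =>
    intro ι _ _ hn wt h0 h1 S₁ S₂ hd φ ψ hφm hψm hφd hψd
    have : IsEmpty ι := Fintype.card_eq_zero_iff.mp hn
    have huniv : (univ : Finset ι) = ∅ := Finset.univ_eq_empty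
    haveI : Unique (ι → V) := Pi.uniqueOfIsEmpty _
    rw [Fintype.sum_unique, Fintype.sum_unique, Fintype.sum_unique, huniv]
    simp only [Finset.image_empty, Finset.univ_eq_empty, Finset.prod_empty, one_mul]
    exact le_of_eq rfl
  | succ n IH =>
    intro ι _ _ hn wt h0 h1 S₁ S₂ hd φ ψ hφm hψm hφd hψd
    have hne : Nonempty ι := Fintype.card_pos_iff.mp (by omega)
    obtain ⟨i₀⟩ := hne
    have hcard : Fintype.card {j // j ≠ i₀} = n := by
      have := Fintype.card_subtype_compl (fun j => j = i₀) (α := ι)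
      simp only [Fintype.card_subtype_eq] at this
      convert this using 2
      omega
    -- weights for the rest
    set wt' : {j // j ≠ i₀} → V → ℝ := fun j v => wt j.1 v with hwt'
    have h0' : ∀ j v, 0 ≤ wt' j v := fun j v => h0 j.1 v
    have h1' : ∀ j, ∑ v, wt' j v = 1 := fun j => h1 j.1
    -- conditional expectations
    set Aφ : V → ℝ := fun w => ∑ y : {j // j ≠ i₀} → V, (∏ j, wt' j (y j)) * φ (insert w (image y univ)) with hAφ
    set Aψ : V → ℝ := fun w => ∑ y : {j // j ≠ i₀} → V, (∏ j, wt' j (y j)) * ψ (insert w (image y univ)) with hAψ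
    have hwnn : ∀ y : {j // j ≠ i₀} → V, 0 ≤ ∏ j, wt' j (y j) :=
      fun y => Finset.prod_nonneg fun j _ => h0' j (y j)
    -- step 4 identities
    have idφ : ∑ x : ι → V, (∏ i, wt i (x i)) * φ (image x univ) = ∑ w, wt i₀ w * Aφ w := by
      rw [split_sum i₀]
      refine Finset.sum_congr rfl fun w _ => ?_
      rw [hAφ]; simp only [Finset.mul_sum]
      refine Finset.sum_congr rfl fun y _ => ?_
      rw [prod_symm ι i₀ wt w y, image_symm ι i₀ w y]; ring
    have idψ : ∑ x : ι → V, (∏ i, wt i (x i)) * ψ (image x univ) = ∑ w, wt i₀ w * Aψ w := by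
      rw [split_sum i₀]
      refine Finset.sum_congr rfl fun w _ => ?_
      rw [hAψ]; simp only [Finset.mul_sum]
      refine Finset.sum_congr rfl fun y _ => ?_
      rw [prod_symm ι i₀ wt w y, image_symm ι i₀ w y]; ring
    -- step 1 + 2: conditional IH
    have step12 : ∑ x : ι → V, (∏ i, wt i (x i)) * (φ (image x univ) * ψ (image x univ))
        ≤ ∑ w, wt i₀ w * (Aφ w * Aψ w) := by
      rw [split_sum i₀]
      refine Finset.sum_le_sum fun w _ => ?_
      have inner : ∑ y : {j // j ≠ i₀} → V, (∏ j, wt' j (y j)) *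
          (φ (insert w (image y univ)) * ψ (insert w (image y univ))) ≤ Aφ w * Aψ w := by
        refine IH {j // j ≠ i₀} hcard wt' h0' h1' S₁ S₂ hd
          (fun B => φ (insert w B)) (fun B => ψ (insert w B))
          (fun A B hAB => hφm _ _ (Finset.insert_subset_insert _ hAB))
          (fun A B hAB => hψm _ _ (Finset.insert_subset_insert _ hAB)) ?_ ?_
        · intro B
          show φ (insert w (B ∩ S₁)) = φ (insert w B)
          rw [← hφd (insert w B), ← hφd (insert w (B ∩ S₁))]
          congr 1; ext v; simp only [Finset.mem_inter, Finset.mem_insert]; tauto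
        · intro B
          show ψ (insert w (B ∩ S₂)) = ψ (insert w B)
          rw [← hψd (insert w B), ← hψd (insert w (B ∩ S₂))]
          congr 1; ext v; simp only [Finset.mem_inter, Finset.mem_insert]; tauto
      calc ∑ y : {j // j ≠ i₀} → V, (∏ i, wt i ((Equiv.funSplitAt i₀ V).symm (w, y) i)) *
            (φ (image ((Equiv.funSplitAt i₀ V).symm (w, y)) univ) * ψ (image ((Equiv.funSplitAt i₀ V).symm (w, y)) univ))
          = wt i₀ w * ∑ y : {j // j ≠ i₀} → V, (∏ j, wt' j (y j)) *
            (φ (insert w (image y univ)) * ψ (insert w (image y univ))) := by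
            rw [Finset.mul_sum]
            refine Finset.sum_congr rfl fun y _ => ?_
            rw [prod_symm ι i₀ wt w y, image_symm ι i₀ w y]; ring
        _ ≤ wt i₀ w * (Aφ w * Aψ w) := mul_le_mul_of_nonneg_left inner (h0 i₀ w)
    -- step 3: zero-one lemma
    have step3 : ∑ w, wt i₀ w * (Aφ w * Aψ w) ≤ (∑ w, wt i₀ w * Aφ w) * (∑ w, wt i₀ w * Aψ w) := by
      set a : ℝ := ∑ y : {j // j ≠ i₀} → V, (∏ j, wt' j (y j)) * φ (image y univ) with ha
      set b : ℝ := ∑ y : {j // j ≠ i₀} → V, (∏ j, wt' j (y j)) * ψ (image y univ) with hb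
      refine zeroOne (wt i₀) (h0 i₀) (h1 i₀) S₁ S₂ hd Aφ Aψ a b ?_ ?_ ?_ ?_
      · intro w
        exact Finset.sum_le_sum fun y _ => mul_le_mul_of_nonneg_left
          (hφm _ _ (Finset.subset_insert _ _)) (hwnn y)
      · intro w hw
        refine Finset.sum_congr rfl fun y _ => ?_
        congr 1
        rw [← hφd (insert w (image y univ)), ← hφd (image y univ)]
        congr 1; ext v
        simp only [Finset.mem_inter, Finset.mem_insert]
        constructor
        · rintro ⟨rfl | h, h2⟩
          · exact absurd h2 hw
          · exact ⟨h, h2⟩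
        · rintro ⟨h, h2⟩; exact ⟨Or.inr h, h2⟩
      · intro w
        exact Finset.sum_le_sum fun y _ => mul_le_mul_of_nonneg_left
          (hψm _ _ (Finset.subset_insert _ _)) (hwnn y)
      · intro w hw
        refine Finset.sum_congr rfl fun y _ => ?_
        congr 1
        rw [← hψd (insert w (image y univ)), ← hψd (image y univ)]
        congr 1; ext v
        simp only [Finset.mem_inter, Finset.mem_insert]
        constructor
        · rintro ⟨rfl | h, h2⟩
          · exact absurd h2 hw
          · exact ⟨h, h2⟩
        · rintro ⟨h, h2⟩; exact ⟨Or.inr h, h2⟩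
    rw [idφ, idψ]
    exact le_trans step12 step3

lemma total_mass (g : V → V → ℝ) : ∑ x : V → V, ∏ u, g u (x u) = ∏ u, ∑ v, g u v := by
  rw [Finset.prod_univ_sum (fun _ => univ) g, Fintype.piFinset_univ]

lemma single_E (wt : V → V → ℝ) (h1 : ∀ u, ∑ v, wt u v = 1) (v₀ : V) (c₀ : ℝ) :
    ∑ x : V → V, (∏ u, wt u (x u)) * (if v₀ ∈ image x univ then 1 else 1 - c₀)
      = 1 - c₀ * ∏ u, (1 - wt u v₀) := by
  have point : ∀ x : V → V, (if v₀ ∈ image x univ then (1:ℝ) else 1 - c₀)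
      = 1 - c₀ * ∏ u, (if x u = v₀ then (0:ℝ) else 1) := by
    intro x
    by_cases h : v₀ ∈ image x univ
    · rw [if_pos h]
      obtain ⟨u, _, hu⟩ := Finset.mem_image.mp h
      have hz : (∏ u : V, if x u = v₀ then (0:ℝ) else 1) = 0 :=
        Finset.prod_eq_zero (Finset.mem_univ u) (if_pos hu)
      rw [hz]; ring
    · rw [if_neg h, Finset.prod_eq_one, mul_one]
      intro u _
      rw [if_neg]
      intro hu
      exact h (Finset.mem_image.mpr ⟨u, Finset.mem_univ u, hu⟩)
  calc ∑ x : V → V, (∏ u, wt u (x u)) * (if v₀ ∈ image x univ then (1:ℝ) else 1 - c₀)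
      = ∑ x : V → V, ((∏ u, wt u (x u)) - c₀ * ∏ u, (wt u (x u) * (if x u = v₀ then (0:ℝ) else 1))) := by
        refine Finset.sum_congr rfl fun x _ => ?_
        rw [point x, Finset.prod_mul_distrib]; ring
    _ = (∑ x : V → V, ∏ u, wt u (x u)) - c₀ * ∑ x : V → V, ∏ u, (wt u (x u) * (if x u = v₀ then (0:ℝ) else 1)) := by
        rw [Finset.sum_sub_distrib, Finset.mul_sum]
    _ = 1 - c₀ * ∏ u, (1 - wt u v₀) := by
        rw [total_mass wt, total_mass (fun u v => wt u v * (if v = v₀ then (0:ℝ) else 1))]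
        rw [Finset.prod_congr rfl (fun u _ => h1 u), Finset.prod_const_one]
        congr 1
        congr 1
        refine Finset.prod_congr rfl fun u _ => ?_
        have : ∀ v : V, wt u v * (if v = v₀ then (0:ℝ) else 1)
            = wt u v - (if v = v₀ then wt u v else 0) := by
          intro v; by_cases h : v = v₀ <;> simp [h]
        rw [Finset.sum_congr rfl (fun v _ => this v), Finset.sum_sub_distrib,
          Finset.sum_ite_eq' univ v₀ (fun v => wt u v), if_pos (Finset.mem_univ v₀), h1 u]

lemma prodE (wt : V → V → ℝ) (h0 : ∀ u v, 0 ≤ wt u v) (h1 : ∀ u, ∑ v, wt u v = 1)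
    (c : V → ℝ) (hc0 : ∀ v, 0 ≤ c v) (hc1 : ∀ v, c v ≤ 1) (S : Finset V) :
    ∑ x : V → V, (∏ u, wt u (x u)) * (∏ v ∈ S, (if v ∈ image x univ then 1 else 1 - c v))
      ≤ ∏ v ∈ S, (1 - c v * ∏ u, (1 - wt u v)) := by
  have hwle : ∀ u v, wt u v ≤ 1 := by
    intro u v
    rw [← h1 u]
    exact Finset.single_le_sum (fun i _ => h0 u i) (Finset.mem_univ v)
  have hq01 : ∀ v, 0 ≤ ∏ u, (1 - wt u v) ∧ ∏ u, (1 - wt u v) ≤ 1 := by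
    intro v
    constructor
    · exact Finset.prod_nonneg fun u _ => by linarith [hwle u v]
    · exact Finset.prod_le_one (fun u _ => by linarith [hwle u v]) (fun u _ => by linarith [h0 u v])
  induction S using Finset.induction_on with
  | empty =>
    simp only [Finset.prod_empty, mul_one]
    rw [total_mass wt, Finset.prod_congr rfl (fun u _ => h1 u), Finset.prod_const_one]
  | @insert v₀ S hv₀ IH =>
    set q₀ : ℝ := ∏ u, (1 - wt u v₀) with hq₀
    have hφm : ∀ A B : Finset V, A ⊆ B →
        (if v₀ ∈ A then (1:ℝ) else 1 - c v₀) ≤ (if v₀ ∈ B then (1:ℝ) else 1 - c v₀) := by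
      intro A B hAB
      by_cases hA : v₀ ∈ A
      · rw [if_pos hA, if_pos (hAB hA)]
      · by_cases hB : v₀ ∈ B <;> simp [hA, hB] <;> linarith [hc0 v₀]
    have hηnn : ∀ (v : V) (B : Finset V), (0:ℝ) ≤ (if v ∈ B then (1:ℝ) else 1 - c v) := by
      intro v B; by_cases h : v ∈ B <;> simp [h] <;> linarith [hc1 v]
    have key := na (Fintype.card V) V rfl wt h0 h1 {v₀} S
      (Finset.disjoint_singleton_left.mpr hv₀)
      (fun B => if v₀ ∈ B then (1:ℝ) else 1 - c v₀)
      (fun B => ∏ v ∈ S, (if v ∈ B then (1:ℝ) else 1 - c v))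
      hφm
      (fun A B hAB => Finset.prod_le_prod (fun v _ => hηnn v A)
        (fun v _ => by
          by_cases hA : v ∈ A
          · rw [if_pos hA, if_pos (hAB hA)]
          · by_cases hB : v ∈ B <;> simp [hA, hB] <;> linarith [hc0 v]))
      (fun B => by simp)
      (fun B => Finset.prod_congr rfl fun v hv => by simp [Finset.mem_inter, hv])
    rw [Finset.prod_insert hv₀]
    calc ∑ x : V → V, (∏ u, wt u (x u)) *
          ∏ v ∈ insert v₀ S, (if v ∈ image x univ then (1:ℝ) else 1 - c v)
        = ∑ x : V → V, (∏ u, wt u (x u)) *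
          ((if v₀ ∈ image x univ then (1:ℝ) else 1 - c v₀) *
            ∏ v ∈ S, (if v ∈ image x univ then (1:ℝ) else 1 - c v)) := by
          refine Finset.sum_congr rfl fun x _ => ?_
          rw [Finset.prod_insert hv₀]
      _ ≤ (∑ x : V → V, (∏ u, wt u (x u)) * (if v₀ ∈ image x univ then (1:ℝ) else 1 - c v₀)) *
          (∑ x : V → V, (∏ u, wt u (x u)) *
            ∏ v ∈ S, (if v ∈ image x univ then (1:ℝ) else 1 - c v)) := key
      _ = (1 - c v₀ * q₀) * (∑ x : V → V, (∏ u, wt u (x u)) *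
            ∏ v ∈ S, (if v ∈ image x univ then (1:ℝ) else 1 - c v)) := by
          rw [single_E wt h1 v₀ (c v₀)]
      _ ≤ (1 - c v₀ * q₀) * ∏ v ∈ S, (1 - c v * ∏ u, (1 - wt u v)) := by
          refine mul_le_mul_of_nonneg_left IH ?_
          have := (hq01 v₀).1
          have := (hq01 v₀).2
          nlinarith [hc0 v₀, hc1 v₀]

lemma one_sub_ge_exp (x : ℝ) (hx0 : 0 ≤ x) (hx2 : x ≤ 1/2) :
    Real.exp (-(x * Real.log 4)) ≤ 1 - x := by
  have hlog4 : Real.log 4 = 2 * Real.log 2 := by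
    rw [show (4:ℝ) = 2^2 by norm_num, Real.log_pow]; push_cast; ring
  have hc := convexOn_exp.2 (Set.mem_univ (0:ℝ)) (Set.mem_univ (-Real.log 2))
    (show (0:ℝ) ≤ 1 - 2*x by linarith) (show (0:ℝ) ≤ 2*x by linarith)
    (show (1 - 2*x) + 2*x = 1 by ring)
  simp only [smul_eq_mul, mul_zero, zero_add, Real.exp_zero] at hc
  have he : Real.exp (-Real.log 2) = 1/2 := by
    rw [Real.exp_neg, Real.exp_log (by norm_num : (0:ℝ) < 2)]; norm_num
  rw [he] at hc
  have : (2*x) * -Real.log 2 = -(x * Real.log 4) := by rw [hlog4]; ring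
  rw [this] at hc
  linarith

lemma pow_deg_ge (d : ℕ) (hd : 2 ≤ d) : (4:ℝ)⁻¹ ≤ (1 - (d:ℝ)⁻¹) ^ d := by
  have hd0 : (0:ℝ) < d := by positivity
  have hinv2 : (d:ℝ)⁻¹ ≤ 1/2 := by
    rw [inv_le_comm₀ hd0 (by norm_num)]
    norm_num; exact_mod_cast hd
  have hinv0 : 0 ≤ (d:ℝ)⁻¹ := by positivity
  have h1 := one_sub_ge_exp _ hinv0 hinv2
  have hstep : Real.exp (-((d:ℝ)⁻¹ * Real.log 4)) ^ d ≤ (1 - (d:ℝ)⁻¹) ^ d :=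
    pow_le_pow_left₀ (Real.exp_nonneg _) h1 d
  have hexp : Real.exp (-((d:ℝ)⁻¹ * Real.log 4)) ^ d = (4:ℝ)⁻¹ := by
    rw [← Real.exp_nat_mul]
    have : (d:ℝ) * -((d:ℝ)⁻¹ * Real.log 4) = -Real.log 4 := by
      field_simp
    rw [this, Real.exp_neg, Real.exp_log (by norm_num : (0:ℝ) < 4)]
  rw [← hexp]; exact hstep

lemma sum_q_ge (q : V → ℝ) (hq0 : ∀ v, 0 ≤ q v)
    (hprod : (4:ℝ)⁻¹ ^ (Fintype.card V) ≤ ∏ v, q v) :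
    (Fintype.card V : ℝ) / 4 ≤ ∑ v, q v := by
  set n := Fintype.card V with hn
  rcases Nat.eq_zero_or_pos n with h0 | hpos
  · rw [h0]; norm_num
    exact Finset.sum_nonneg fun v _ => hq0 v
  have hn0 : (0:ℝ) < n := by exact_mod_cast hpos
  have hw : ∑ _v : V, (n:ℝ)⁻¹ = 1 := by
    rw [Finset.sum_const, Finset.card_univ, ← hn, nsmul_eq_mul]
    field_simp
  have hamgm := Real.geom_mean_le_arith_mean_weighted univ (fun _ => (n:ℝ)⁻¹) q
    (fun _ _ => by positivity) hw (fun v _ => hq0 v)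
  have hL : ((4:ℝ)⁻¹ ^ n) ^ ((n:ℝ)⁻¹) ≤ (∏ v, q v) ^ ((n:ℝ)⁻¹) :=
    Real.rpow_le_rpow (by positivity) hprod (by positivity)
  have hLval : ((4:ℝ)⁻¹ ^ n) ^ ((n:ℝ)⁻¹) = (4:ℝ)⁻¹ := by
    rw [← Real.rpow_natCast ((4:ℝ)⁻¹) n, ← Real.rpow_mul (by norm_num)]
    rw [mul_inv_cancel₀ (ne_of_gt hn0), Real.rpow_one]
  have hfp : (∏ v, q v) ^ ((n:ℝ)⁻¹) = ∏ v, q v ^ ((n:ℝ)⁻¹) :=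
    (Real.finset_prod_rpow univ q (fun v _ => hq0 v) _).symm
  have h4 : (4:ℝ)⁻¹ ≤ ∑ v, (n:ℝ)⁻¹ * q v := by
    calc (4:ℝ)⁻¹ = ((4:ℝ)⁻¹ ^ n) ^ ((n:ℝ)⁻¹) := hLval.symm
      _ ≤ (∏ v, q v) ^ ((n:ℝ)⁻¹) := hL
      _ = ∏ v, q v ^ ((n:ℝ)⁻¹) := hfp
      _ ≤ ∑ v, (n:ℝ)⁻¹ * q v := hamgm
  have : ∑ v, (n:ℝ)⁻¹ * q v = (n:ℝ)⁻¹ * ∑ v, q v := by rw [Finset.mul_sum]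
  rw [this] at h4
  have h5 := mul_le_mul_of_nonneg_left h4 hn0.le
  rw [← mul_assoc, mul_inv_cancel₀ (ne_of_gt hn0), one_mul] at h5
  linarith

end FewLeavesAux

open FewLeavesAux Finset


/- A *1-out-directed graph* in `G` is encoded by a function `f : V → V` with
`G.Adj u (f u)` for every vertex `u`; a uniformly random one corresponds to a uniformly
random such `f`, so probabilities are ratios of counts of such functions. A vertex `v`
has in-degree `0` iff `f u ≠ v` for all `u`. -/

/-- Let `G` be a graph with `n` vertices and minimum degree at least `2`, and let `𝒟` be
a uniformly random 1-out-directed graph in `G`. Then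
`ℙ(𝒟 has at most n/8 vertices of in-degree 0) ≤ e^{-n/32}`. -/
theorem few_in_degree_zero_unlikely
    (V : Type) [Fintype V] [DecidableEq V] (G : SimpleGraph V) [DecidableRel G.Adj]
    (hdeg : ∀ u : V, 2 ≤ G.degree u) :
    ({f : V → V | (∀ u : V, G.Adj u (f u)) ∧
          ({v : V | ∀ u : V, f u ≠ v}.ncard : ℝ) ≤ (Fintype.card V : ℝ) / 8}.ncard : ℝ) /
        ({f : V → V | ∀ u : V, G.Adj u (f u)}.ncard : ℝ) ≤
      Real.exp (-(Fintype.card V : ℝ) / 32) := by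
  classical
  set n := Fintype.card V with hn
  set d : V → ℕ := fun u => G.degree u with hd
  set wt : V → V → ℝ := fun u v => if G.Adj u v then ((d u : ℝ))⁻¹ else 0 with hwt
  have hd2 : ∀ u, 2 ≤ d u := hdeg
  have hdpos : ∀ u, (0:ℝ) < d u := by
    intro u; have := hd2 u
    have : (2:ℝ) ≤ d u := by exact_mod_cast this
    linarith
  have h0 : ∀ u v, 0 ≤ wt u v := by
    intro u v; rw [hwt]; dsimp only
    split
    · positivity
    · exact le_refl 0
  have hfiltercard : ∀ u, (univ.filter (G.Adj u)).card = d u := by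
    intro u
    rw [hd]; dsimp only
    rw [← SimpleGraph.neighborFinset_eq_filter, SimpleGraph.card_neighborFinset_eq_degree]
  have h1 : ∀ u, ∑ v, wt u v = 1 := by
    intro u
    have : ∀ v, wt u v = (if G.Adj u v then (1:ℝ) else 0) * (d u : ℝ)⁻¹ := by
      intro v; rw [hwt]; dsimp only; split <;> ring
    rw [Finset.sum_congr rfl (fun v _ => this v), ← Finset.sum_mul, Finset.sum_boole,
      hfiltercard u, mul_inv_cancel₀ (ne_of_gt (hdpos u))]
  have hwle : ∀ u v, wt u v ≤ 1 := by
    intro u v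
    rw [← h1 u]
    exact Finset.single_le_sum (fun i _ => h0 u i) (Finset.mem_univ v)
  -- the leaf-probabilities q
  set q : V → ℝ := fun v => ∏ u, (1 - wt u v) with hq
  have hq0 : ∀ v, 0 ≤ q v := fun v => Finset.prod_nonneg fun u _ => by linarith [hwle u v]
  have hq1 : ∀ v, q v ≤ 1 :=
    fun v => Finset.prod_le_one (fun u _ => by linarith [hwle u v]) (fun u _ => by linarith [h0 u v])
  have hrowprod : ∀ u, ∏ v, (1 - wt u v) = (1 - (d u:ℝ)⁻¹) ^ (d u) := by
    intro u
    have : ∀ v, (1 - wt u v) = if G.Adj u v then (1 - (d u:ℝ)⁻¹) else 1 := by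
      intro v; rw [hwt]; dsimp only; split <;> ring
    rw [Finset.prod_congr rfl (fun v _ => this v), Finset.prod_ite, Finset.prod_const,
      Finset.prod_const, one_pow, mul_one, hfiltercard u]
  have hqprod : (4:ℝ)⁻¹ ^ n ≤ ∏ v, q v := by
    have hcomm : ∏ v, q v = ∏ u, ∏ v, (1 - wt u v) := Finset.prod_comm
    rw [hcomm]
    calc (4:ℝ)⁻¹ ^ n = ∏ _u : V, (4:ℝ)⁻¹ := by rw [Finset.prod_const, Finset.card_univ, hn]
      _ ≤ ∏ u, ∏ v, (1 - wt u v) := by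
          refine Finset.prod_le_prod (fun u _ => by norm_num) (fun u _ => ?_)
          rw [hrowprod u]
          exact pow_deg_ge (d u) (hd2 u)
  have hsq : (n:ℝ)/4 ≤ ∑ v, q v := sum_q_ge q hq0 hqprod
  -- normalization
  set D : ℝ := ∏ u, (d u : ℝ) with hD
  have hDpos : 0 < D := Finset.prod_pos fun u _ => hdpos u
  have hwprod_adm : ∀ f : V → V, (∀ u, G.Adj u (f u)) → ∏ u, wt u (f u) = D⁻¹ := by
    intro f hf
    rw [hD, ← Finset.prod_inv_distrib]
    refine Finset.prod_congr rfl fun u _ => ?_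
    rw [hwt]; dsimp only; rw [if_pos (hf u)]
  have hwprod_nonneg : ∀ f : V → V, 0 ≤ ∏ u, wt u (f u) :=
    fun f => Finset.prod_nonneg fun u _ => h0 u (f u)
  set Adm : Finset (V → V) := univ.filter (fun f => ∀ u, G.Adj u (f u)) with hAdm
  have hAdmD : (Adm.card : ℝ) = D := by
    have step1 : ∀ x : V → V, (∏ u, (if G.Adj u (x u) then (1:ℝ) else 0))
        = if (∀ u, G.Adj u (x u)) then (1:ℝ) else 0 := by
      intro x
      by_cases hx : ∀ u, G.Adj u (x u)
      · rw [if_pos hx, Finset.prod_eq_one fun u _ => if_pos (hx u)]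
      · rw [if_neg hx]
        push_neg at hx
        obtain ⟨u, hu⟩ := hx
        exact Finset.prod_eq_zero (Finset.mem_univ u) (if_neg hu)
    have := total_mass (fun u v => if G.Adj u v then (1:ℝ) else 0)
    rw [Finset.sum_congr rfl (fun x _ => step1 x), Finset.sum_boole] at this
    rw [hAdm, this, hD]
    refine Finset.prod_congr rfl fun u _ => ?_
    rw [Finset.sum_boole, hfiltercard u]
  -- leaf counting
  have hleaf : ∀ f : V → V, ({v : V | ∀ u : V, f u ≠ v}.ncard : ℕ) = (univ \ image f univ).card := by
    intro f
    rw [Set.ncard_eq_toFinset_card', Set.toFinset_setOf]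
    congr 1
    ext v
    simp [Finset.mem_sdiff, Finset.mem_image, eq_comm]
  set Bad : Finset (V → V) := univ.filter
    (fun f => (∀ u, G.Adj u (f u)) ∧ (((univ \ image f univ).card : ℝ) ≤ (n:ℝ)/8)) with hBad
  -- the p.g.f.
  set T : ℝ := ∑ x : V → V, (∏ u, wt u (x u)) *
    (∏ v ∈ univ, (if v ∈ image x univ then (1:ℝ) else 1 - 1/2)) with hT
  have hhalfprod : ∀ B : Finset V, (∏ v ∈ univ, (if v ∈ B then (1:ℝ) else 1 - 1/2))
      = (1/2:ℝ) ^ ((univ \ B).card) := by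
    intro B
    rw [Finset.prod_ite, Finset.prod_const, Finset.prod_const, one_pow, one_mul]
    norm_num
    congr 1
    ext v
    simp [Finset.mem_sdiff]
  have hpow_exp : ∀ k : ℕ, (1/2:ℝ) ^ k = Real.exp ((k:ℝ) * (-Real.log 2)) := by
    intro k
    rw [Real.exp_nat_mul, Real.exp_neg, Real.exp_log (by norm_num : (0:ℝ) < 2)]
    norm_num
  have hTupper : T ≤ Real.exp (-(n:ℝ)/8) := by
    have h1' := prodE wt h0 h1 (fun _ => 1/2) (fun _ => by norm_num) (fun _ => by norm_num) univ
    have h2' : ∏ v ∈ univ, (1 - (1/2) * ∏ u, (1 - wt u v)) ≤ ∏ v ∈ univ, Real.exp (-(1/2 * q v)) := by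
      refine Finset.prod_le_prod (fun v _ => by
        have := hq1 v; have := hq0 v
        simp only [hq] at *
        nlinarith) (fun v _ => ?_)
      have := Real.add_one_le_exp (-(1/2 * q v))
      rw [hq] at *
      linarith
    have h3' : ∏ v ∈ univ, Real.exp (-(1/2 * q v)) = Real.exp (∑ v, -(1/2 * q v)) :=
      (Real.exp_sum univ _).symm
    have h4' : Real.exp (∑ v, -(1/2 * q v)) ≤ Real.exp (-(n:ℝ)/8) := by
      apply Real.exp_le_exp.mpr
      rw [Finset.sum_neg_distrib, ← Finset.mul_sum]
      linarith [hsq]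
    calc T ≤ ∏ v ∈ univ, (1 - (1/2) * ∏ u, (1 - wt u v)) := h1'
      _ ≤ ∏ v ∈ univ, Real.exp (-(1/2 * q v)) := h2'
      _ = Real.exp (∑ v, -(1/2 * q v)) := h3'
      _ ≤ Real.exp (-(n:ℝ)/8) := h4'
  have hTlower : (Bad.card : ℝ) * (D⁻¹ * Real.exp (((n:ℝ)/8) * (-Real.log 2))) ≤ T := by
    have termnn : ∀ x : V → V, 0 ≤ (∏ u, wt u (x u)) *
        (∏ v ∈ univ, (if v ∈ image x univ then (1:ℝ) else 1 - 1/2)) := by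
      intro x
      refine mul_nonneg (hwprod_nonneg x) (Finset.prod_nonneg fun v _ => ?_)
      split <;> norm_num
    have hsub : ∑ x ∈ Bad, (∏ u, wt u (x u)) *
        (∏ v ∈ univ, (if v ∈ image x univ then (1:ℝ) else 1 - 1/2)) ≤ T := by
      rw [hT]
      exact Finset.sum_le_sum_of_subset_of_nonneg (Finset.subset_univ _)
        (fun x _ _ => termnn x)
    refine le_trans ?_ hsub
    have hconst : (Bad.card : ℝ) * (D⁻¹ * Real.exp (((n:ℝ)/8) * (-Real.log 2)))
        = ∑ _x ∈ Bad, D⁻¹ * Real.exp (((n:ℝ)/8) * (-Real.log 2)) := by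
      rw [Finset.sum_const, nsmul_eq_mul]
    rw [hconst]
    refine Finset.sum_le_sum fun x hx => ?_
    rw [hBad, Finset.mem_filter] at hx
    obtain ⟨-, hadm, hcard⟩ := hx
    rw [hwprod_adm x hadm, hhalfprod, hpow_exp]
    refine mul_le_mul_of_nonneg_left ?_ (by positivity)
    apply Real.exp_le_exp.mpr
    have hl2 : 0 ≤ Real.log 2 := Real.log_nonneg (by norm_num)
    nlinarith [hcard]
  -- final computation
  have hBadD : (Bad.card : ℝ) ≤ Real.exp (-(n:ℝ)/32) * D := by
    have hE : 0 < Real.exp (((n:ℝ)/8) * (-Real.log 2)) := Real.exp_pos _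
    have step : (Bad.card : ℝ) * D⁻¹ ≤ Real.exp (-(n:ℝ)/8) * Real.exp (((n:ℝ)/8) * (Real.log 2)) := by
      have := hTlower.trans hTupper
      rw [mul_comm ((Bad.card:ℝ)) _] at this
      have h2 : (Bad.card : ℝ) * D⁻¹ ≤ Real.exp (-(n:ℝ)/8) / Real.exp (((n:ℝ)/8) * (-Real.log 2)) := by
        rw [le_div_iff₀ hE]
        calc (Bad.card:ℝ) * D⁻¹ * Real.exp ((n:ℝ)/8 * -Real.log 2)
            = (Bad.card:ℝ) * (D⁻¹ * Real.exp ((n:ℝ)/8 * -Real.log 2)) := by ring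
          _ ≤ T := hTlower
          _ ≤ _ := hTupper
      refine h2.trans (le_of_eq ?_)
      rw [div_eq_mul_inv, ← Real.exp_neg]
      congr 2
      ring
    have hcomb : Real.exp (-(n:ℝ)/8) * Real.exp (((n:ℝ)/8) * (Real.log 2)) ≤ Real.exp (-(n:ℝ)/32) := by
      rw [← Real.exp_add]
      apply Real.exp_le_exp.mpr
      have hl2 : Real.log 2 < 0.6931471808 := Real.log_two_lt_d9
      have hn0 : (0:ℝ) ≤ n := Nat.cast_nonneg n
      nlinarith
    have := step.trans hcomb
    calc (Bad.card : ℝ) = ((Bad.card : ℝ) * D⁻¹) * D := by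
          field_simp
      _ ≤ Real.exp (-(n:ℝ)/32) * D := mul_le_mul_of_nonneg_right this (le_of_lt hDpos)
  -- convert the ncard statement
  have hsetBad : ({f : V → V | (∀ u : V, G.Adj u (f u)) ∧
      ({v : V | ∀ u : V, f u ≠ v}.ncard : ℝ) ≤ (Fintype.card V : ℝ) / 8}.ncard : ℝ) = Bad.card := by
    norm_cast
    rw [Set.ncard_eq_toFinset_card', Set.toFinset_setOf]
    congr 1
    apply Finset.filter_congr
    intro f _
    rw [hleaf f, ← hn]
  have hsetAdm : ({f : V → V | ∀ u : V, G.Adj u (f u)}.ncard : ℝ) = Adm.card := by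
    norm_cast
    rw [Set.ncard_eq_toFinset_card', Set.toFinset_setOf]
  rw [hsetBad, hsetAdm, hAdmD, div_le_iff₀ hDpos]
  rw [show -(Fintype.card V : ℝ)/32 = -(n:ℝ)/32 from by rw [hn]]
  exact hBadD
end

section
/- Let G be a connected graph, let T be a spanning tree of G, let (L, P) be a leaf selection for T, and let T' be obtained from T by an (L,P)-leaf reconfiguration, i.e., by removing for each leaf v ∈ L the edge between v and its parent p_T(v) and adding an edge between v and some vertex u ∈ P(v). Then T' is again a spanning tree of G. -/
/-!
Vertices of `L` have exactly one neighbour in both `T` and `T'` (the old parent resp. the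
new one, which lies outside `L`). Since every vertex of a cycle has two distinct neighbours,
a cycle of `T'` avoids `L` and so is a cycle of `T`. Conversely a walk of `T` between
vertices outside `L` can enter a vertex of `L` only to turn back at once, so deleting these
detours gives a walk of `T'`; and every vertex of `L` is joined in `T'` to a vertex outside `L`.
-/

open SimpleGraph

namespace SimpleGraph

variable {V : Type} {H H' T : SimpleGraph V} {L : Set V} {σ : V → V}

lemma Walk.IsCycle.not_neighborSet_subsingleton {v : V} {c : H.Walk v v} (hc : c.IsCycle) :
    ¬ (H.neighborSet v).Subsingleton := fun h =>
  hc.snd_ne_penultimate <|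
    h (c.adj_snd hc.not_nil) (c.adj_penultimate hc.not_nil).symm

lemma Walk.IsCycle.notMem_support_of_neighborSet_subsingleton {u v : V} {c : H.Walk u u}
    (hc : c.IsCycle) (hv : (H.neighborSet v).Subsingleton) : v ∉ c.support := by
  classical
  exact fun hmem => (hc.rotate hmem).not_neighborSet_subsingleton hv

lemma Walk.reachable_of_neighborSet_subsingleton
    (hL : ∀ v ∈ L, (H.neighborSet v).Subsingleton)
    (hH' : ∀ x y, x ∉ L → y ∉ L → H.Adj x y → H'.Adj x y)
    {a b : V} (p : H.Walk a b) (ha : a ∉ L) (hb : b ∉ L) : H'.Reachable a b := by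
  -- A walk that steps from `a` into `x ∈ L` must step straight back to `a`.
  suffices ∀ {x} (q : H.Walk x b),
      (x ∉ L → H'.Reachable x b) ∧ (x ∈ L → ∀ y ∉ L, H.Adj x y → H'.Reachable y b) from
    (this p).1 ha
  intro x q
  clear p
  induction q with
  | nil => exact ⟨fun _ => .rfl, fun hx => absurd hx hb⟩
  | @cons x c b hxc q ih =>
    obtain ⟨ih_out, ih_in⟩ := ih hb
    refine ⟨fun hx => ?_, fun hx y hy hxy => ?_⟩
    · by_cases hc : c ∈ L
      · exact ih_in hc x hx hxc.symm
      · exact (hH' x c hx hc hxc).reachable.trans (ih_out hc)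
    · obtain rfl : c = y := hL x hx hxc hxy
      exact ih_out hy

def leafReconfig (T : SimpleGraph V) (L : Set V) (σ : V → V) : SimpleGraph V :=
  fromRel fun x y => (T.Adj x y ∧ x ∉ L ∧ y ∉ L) ∨ (x ∈ L ∧ y = σ x)

lemma leafReconfig_adj_iff_of_notMem {x y : V} (hx : x ∉ L) (hy : y ∉ L) :
    (leafReconfig T L σ).Adj x y ↔ T.Adj x y := by
  simp only [leafReconfig, fromRel_adj]
  constructor
  · rintro ⟨-, (⟨h, -⟩ | ⟨hx', -⟩) | (⟨h, -⟩ | ⟨hy', -⟩)⟩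
    · exact h
    · exact absurd hx' hx
    · exact h.symm
    · exact absurd hy' hy
  · exact fun h => ⟨h.ne, .inl (.inl ⟨h, hx, hy⟩)⟩

lemma leafReconfig_adj_iff_of_mem (hσL : ∀ v ∈ L, σ v ∉ L) {v w : V} (hv : v ∈ L) :
    (leafReconfig T L σ).Adj v w ↔ w = σ v := by
  simp only [leafReconfig, fromRel_adj]
  constructor
  · rintro ⟨-, ⟨⟨-, hv', -⟩ | ⟨-, rfl⟩⟩ | ⟨⟨-, -, hv'⟩ | ⟨hw, rfl⟩⟩⟩
    · exact absurd hv hv'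
    · rfl
    · exact absurd hv hv'
    · exact absurd hv (hσL w hw)
  · rintro rfl
    exact ⟨fun h => hσL v hv (h ▸ hv), .inl (.inr ⟨hv, rfl⟩)⟩

lemma leafReconfig_neighborSet_subsingleton (hσL : ∀ v ∈ L, σ v ∉ L) {v : V} (hv : v ∈ L) :
    ((leafReconfig T L σ).neighborSet v).Subsingleton := fun _ hw _ hw' =>
  ((leafReconfig_adj_iff_of_mem hσL hv).mp hw).trans
    ((leafReconfig_adj_iff_of_mem hσL hv).mp hw').symm

lemma leafReconfig_le {G : SimpleGraph V} (hTG : T ≤ G) (hσG : ∀ v ∈ L, G.Adj v (σ v)) :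
    leafReconfig T L σ ≤ G := by
  intro x y
  simp only [leafReconfig, fromRel_adj]
  rintro ⟨-, (⟨h, -⟩ | ⟨hx, rfl⟩) | (⟨h, -⟩ | ⟨hy, rfl⟩)⟩
  · exact hTG h
  · exact hσG x hx
  · exact (hTG h).symm
  · exact (hσG y hy).symm

lemma leafReconfig_isAcyclic (hT : T.IsAcyclic) (hσL : ∀ v ∈ L, σ v ∉ L) :
    (leafReconfig T L σ).IsAcyclic := by
  intro u c hc
  have hsupp : ∀ v ∈ c.support, v ∉ L := fun v hv hvL =>
    hc.notMem_support_of_neighborSet_subsingleton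
      (leafReconfig_neighborSet_subsingleton hσL hvL) hv
  have hedges : ∀ e ∈ c.edges, e ∈ T.edgeSet := by
    intro e he
    induction e using Sym2.ind with
    | _ x y =>
      exact (leafReconfig_adj_iff_of_notMem (hsupp x (c.fst_mem_support_of_mem_edges he))
        (hsupp y (c.snd_mem_support_of_mem_edges he))).mp (c.adj_of_mem_edges he)
  exact hT (c.transfer T hedges) (hc.transfer hedges)

lemma leafReconfig_connected (hT : T.Connected)
    (hL : ∀ v ∈ L, (T.neighborSet v).Subsingleton) (hσL : ∀ v ∈ L, σ v ∉ L) :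
    (leafReconfig T L σ).Connected := by
  have reach_out : ∀ z, ∃ z' ∉ L, (leafReconfig T L σ).Reachable z z' := by
    intro z
    by_cases hz : z ∈ L
    · exact ⟨σ z, hσL z hz, ((leafReconfig_adj_iff_of_mem hσL hz).mpr rfl).reachable⟩
    · exact ⟨z, hz, .rfl⟩
  refine (connected_iff _).mpr ⟨fun x y => ?_, hT.nonempty⟩
  obtain ⟨x', hx', hxx'⟩ := reach_out x
  obtain ⟨y', hy', hyy'⟩ := reach_out y
  obtain ⟨p⟩ := hT.preconnected x' y'
  have hx'y' : (leafReconfig T L σ).Reachable x' y' :=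
    p.reachable_of_neighborSet_subsingleton hL
      (fun _ _ ha hb => (leafReconfig_adj_iff_of_notMem ha hb).mpr) hx' hy'
  exact hxx'.trans (hx'y'.trans hyy'.symm)

lemma leafReconfig_isTree (hT : T.IsTree)
    (hL : ∀ v ∈ L, (T.neighborSet v).Subsingleton) (hσL : ∀ v ∈ L, σ v ∉ L) :
    (leafReconfig T L σ).IsTree :=
  ⟨leafReconfig_connected hT.connected hL hσL, leafReconfig_isAcyclic hT.isAcyclic hσL⟩

end SimpleGraph

theorem leaf_reconfiguration_is_spanning_tree_general
    (V : Type) (G : SimpleGraph V)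
    (T : SimpleGraph V) (hTle : T ≤ G) (hT : T.IsTree)
    (L : Set V) (P : V → Set V) (pT : V → V) (σ : V → V)
    (hleaf : ∀ v ∈ L, (T.neighborSet v).ncard = 1)
    (hP : ∀ v ∈ L, pT v ∈ P v ∧ P v ⊆ G.neighborSet v \ L)
    (hσ : ∀ v ∈ L, σ v ∈ P v) :
    SimpleGraph.fromRel
        (fun x y => (T.Adj x y ∧ x ∉ L ∧ y ∉ L) ∨ (x ∈ L ∧ y = σ x)) ≤ G ∧
    (SimpleGraph.fromRel
        (fun x y => (T.Adj x y ∧ x ∉ L ∧ y ∉ L) ∨ (x ∈ L ∧ y = σ x))).IsTree := by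
  have hσ_nbr : ∀ v ∈ L, σ v ∈ G.neighborSet v \ L := fun v hv => (hP v hv).2 (hσ v hv)
  have hL : ∀ v ∈ L, (T.neighborSet v).Subsingleton := fun v hv => by
    obtain ⟨a, ha⟩ := Set.ncard_eq_one.mp (hleaf v hv)
    exact ha ▸ Set.subsingleton_singleton
  exact ⟨leafReconfig_le hTle fun v hv => (hσ_nbr v hv).1,
    leafReconfig_isTree hT hL fun v hv => (hσ_nbr v hv).2⟩

/-- Let `G` be a connected graph, let `T` be a spanning tree of `G`, let `(L, P)` be a
leaf selection for `T` (so `L` is a set of leaves of `T`, and for each `v ∈ L` the set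
of potential parents `P v` satisfies `p_T(v) ∈ P v ⊆ N_G(v) \ L`), and let `T'` be
obtained from `T` by an `(L,P)`-leaf reconfiguration: for each leaf `v ∈ L` the edge
between `v` and its parent `p_T(v)` is removed and an edge between `v` and some vertex
`σ v ∈ P v` is added. Then `T'` is again a spanning tree of `G`.

Here a leaf of `T` is a vertex `v` with exactly one neighbour in `T`, its parent
`pT v` is that unique neighbour (encoded by `T.Adj v (pT v)`), and `T'` is the graph
whose edges are the edges of `T` with both endpoints outside `L` together with the
edges `{v, σ v}` for `v ∈ L`. -/
theorem leaf_reconfiguration_is_spanning_tree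
    (V : Type) [Fintype V] [DecidableEq V] (G : SimpleGraph V) (hG : G.Connected)
    (T : SimpleGraph V) (hTle : T ≤ G) (hT : T.IsTree)
    (L : Set V) (P : V → Set V) (pT : V → V) (σ : V → V)
    (hleaf : ∀ v ∈ L, (T.neighborSet v).ncard = 1)
    (hparent : ∀ v ∈ L, T.Adj v (pT v))
    (hP : ∀ v ∈ L, pT v ∈ P v ∧ P v ⊆ G.neighborSet v \ L)
    (hσ : ∀ v ∈ L, σ v ∈ P v) :
    SimpleGraph.fromRel
        (fun x y => (T.Adj x y ∧ x ∉ L ∧ y ∉ L) ∨ (x ∈ L ∧ y = σ x)) ≤ G ∧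
    (SimpleGraph.fromRel
        (fun x y => (T.Adj x y ∧ x ∉ L ∧ y ∉ L) ∨ (x ∈ L ∧ y = σ x))).IsTree :=
  leaf_reconfiguration_is_spanning_tree_general V G T hTle hT L P pT σ hleaf hP hσ
end

section
/- Let G be a connected graph, let 𝒯 be a uniformly random spanning tree of G, and let 𝒮 be a reversible leaf reconfiguration strategy whose random input 𝓡 is independent of 𝒯. If 𝒯' is obtained from 𝒯 by a uniformly random 𝒮(𝒯,𝓡)-leaf reconfiguration, then 𝒯' is a uniformly random spanning tree of G (i.e., 𝒯' has the uniform distribution on spanning trees of G). -/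
/-- The spanning tree obtained from `T` by the leaf reconfiguration that, for each leaf
`v ∈ L`, removes the edge between `v` and its parent and attaches `v` to the new parent
`σ v` instead: its edges are the edges of `T` with both endpoints outside `L` together
with the edges `{v, σ v}` for `v ∈ L`. -/
def reconfigured {V : Type} (T : SimpleGraph V) (L : Set V) (σ : V → V) : SimpleGraph V :=
  SimpleGraph.fromRel (fun x y => (T.Adj x y ∧ x ∉ L ∧ y ∉ L) ∨ (x ∈ L ∧ y = σ x))

/-- `(L, P)` is a leaf selection for the spanning tree `T` of `G`: every `v ∈ L` is a
leaf of `T` (exactly one neighbour in `T`), its parent (its unique `T`-neighbour)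
belongs to `P v`, and `P v ⊆ N_G(v) \ L`. -/
def IsLeafSelection {V : Type} (G T : SimpleGraph V) (LP : Set V × (V → Set V)) : Prop :=
  ∀ v ∈ LP.1, (T.neighborSet v).ncard = 1 ∧ T.neighborSet v ⊆ LP.2 v ∧
    LP.2 v ⊆ G.neighborSet v \ LP.1

/-- A choice function `σ` of new parents for the leaf selection `(L, P)`: for every
`v ∈ L` the new parent `σ v` belongs to `P v`, and `σ` is the identity off `L` (so that
counting such `σ` uniformly amounts to choosing the new parents independently and
uniformly at random). -/
def IsParentChoice {V : Type} (LP : Set V × (V → Set V)) (σ : V → V) : Prop :=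
  (∀ v ∈ LP.1, σ v ∈ LP.2 v) ∧ ∀ v ∉ LP.1, σ v = v

/-!
Fix the random input `R` and a spanning tree `T'`, and let `(L, P) = S(T', R)`. A leaf
reconfiguration only changes the edges at `L`, so reattaching the leaves to their old parents
undoes it; together with reversibility (`S(T, R) = S(T', R)` whenever `T'` is a reconfiguration
of `T`) this makes "`T'` is an `S(T, R)`-reconfiguration of `T`" a symmetric relation, realised
by exactly one parent choice. Hence the probability of moving from `T` to `T'` is
`1 / #{parent choices for (L, P)}` if `T` is a reconfiguration of `T'` and `0` otherwise. Distinct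
parent choices give distinct trees, so these probabilities sum to `1` over `T`, for every `R`.
-/

open SimpleGraph

namespace SimpleGraph.Walk

variable {V : Type} {G : SimpleGraph V} {u w v : V}

lemma ncard_neighborSet_toSubgraph_le_one (p : G.Walk u w) (hv : (G.neighborSet v).ncard = 1) :
    (p.toSubgraph.neighborSet v).ncard ≤ 1 :=
  hv ▸ Set.ncard_le_ncard (p.toSubgraph.neighborSet_subset v)
    (Set.finite_of_ncard_pos (hv ▸ Nat.one_pos))

lemma IsPath.eq_or_eq_of_ncard_neighborSet_eq_one {p : G.Walk u w} (hp : p.IsPath)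
    (hv : v ∈ p.support) (hleaf : (G.neighborSet v).ncard = 1) : v = u ∨ v = w := by
  obtain ⟨i, rfl, hi⟩ := p.mem_support_iff_exists_getVert.mp hv
  by_contra! hne
  have hi0 : i ≠ 0 := by rintro rfl; simp at hne
  have hil : i < p.length := hi.lt_of_ne (by rintro rfl; simp at hne)
  have htwo := hp.ncard_neighborSet_toSubgraph_internal_eq_two hi0 hil
  have hle := p.ncard_neighborSet_toSubgraph_le_one hleaf
  omega

lemma IsCycle.ncard_neighborSet_ne_one {p : G.Walk u u} (hp : p.IsCycle) (hv : v ∈ p.support) :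
    (G.neighborSet v).ncard ≠ 1 := fun hleaf => by
  have htwo := hp.ncard_neighborSet_toSubgraph_eq_two hv
  have hle := p.ncard_neighborSet_toSubgraph_le_one hleaf
  omega

end SimpleGraph.Walk

section Reconfigured

variable {V : Type} {T : SimpleGraph V} {L : Set V} {σ : V → V}

lemma reconfigured_adj {x y : V} :
    (reconfigured T L σ).Adj x y ↔ x ≠ y ∧
      ((T.Adj x y ∧ x ∉ L ∧ y ∉ L) ∨ (x ∈ L ∧ y = σ x) ∨ (y ∈ L ∧ x = σ y)) := by
  simp only [reconfigured, fromRel_adj, T.adj_comm y x]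
  tauto

lemma reconfigured_adj_of_notMem {x y : V} (hx : x ∉ L) (hy : y ∉ L) :
    (reconfigured T L σ).Adj x y ↔ T.Adj x y := by
  rw [reconfigured_adj]
  exact ⟨by tauto, fun h => ⟨h.ne, Or.inl ⟨h, hx, hy⟩⟩⟩

lemma neighborSet_reconfigured_of_mem (hσ : ∀ v ∈ L, σ v ∉ L) {v : V} (hv : v ∈ L) :
    (reconfigured T L σ).neighborSet v = {σ v} := by
  ext y
  simp only [mem_neighborSet, Set.mem_singleton_iff, reconfigured_adj]
  constructor
  · rintro ⟨-, ⟨-, hvL, -⟩ | ⟨-, rfl⟩ | ⟨hy, rfl⟩⟩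
    · exact absurd hv hvL
    · rfl
    · exact absurd hv (hσ y hy)
  · rintro rfl
    exact ⟨fun h => hσ v hv (h ▸ hv), Or.inr (Or.inl ⟨hv, rfl⟩)⟩

lemma reconfigured_reconfigured (τ : V → V) :
    reconfigured (reconfigured T L σ) L τ = reconfigured T L τ := by
  ext x y
  have hoff : (reconfigured T L σ).Adj x y ∧ x ∉ L ∧ y ∉ L ↔ T.Adj x y ∧ x ∉ L ∧ y ∉ L :=
    and_congr_left fun ⟨hx, hy⟩ => reconfigured_adj_of_notMem hx hy
  rw [reconfigured_adj, hoff, reconfigured_adj]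

lemma reconfigured_eq_self (hσ : ∀ v ∈ L, T.neighborSet v = {σ v}) :
    reconfigured T L σ = T := by
  have hleaf : ∀ v ∈ L, ∀ w, T.Adj v w ↔ w = σ v := fun v hv w => Set.ext_iff.mp (hσ v hv) w
  ext x y
  rw [reconfigured_adj]
  constructor
  · rintro ⟨-, ⟨h, -, -⟩ | ⟨hx, rfl⟩ | ⟨hy, rfl⟩⟩
    · exact h
    · exact (hleaf x hx _).2 rfl
    · exact ((hleaf y hy _).2 rfl).symm
  · intro h
    refine ⟨h.ne, ?_⟩
    by_cases hx : x ∈ L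
    · exact Or.inr (Or.inl ⟨hx, (hleaf x hx y).1 h⟩)
    by_cases hy : y ∈ L
    · exact Or.inr (Or.inr ⟨hy, (hleaf y hy x).1 h.symm⟩)
    exact Or.inl ⟨h, hx, hy⟩

lemma reconfigured_le {G : SimpleGraph V} (hT : T ≤ G) (hσ : ∀ v ∈ L, G.Adj v (σ v)) :
    reconfigured T L σ ≤ G := by
  intro x y h
  obtain ⟨-, ⟨h, -, -⟩ | ⟨hx, rfl⟩ | ⟨hy, rfl⟩⟩ := reconfigured_adj.mp h
  · exact hT h
  · exact hσ x hx
  · exact (hσ y hy).symm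

lemma eqOn_of_reconfigured_eq {τ : V → V} (hσ : ∀ v ∈ L, σ v ∉ L) (hτ : ∀ v ∈ L, τ v ∉ L)
    (h : reconfigured T L σ = reconfigured T L τ) : Set.EqOn σ τ L := by
  intro v hv
  have hnbr := neighborSet_reconfigured_of_mem (T := T) hσ hv
  rwa [h, neighborSet_reconfigured_of_mem hτ hv, Set.singleton_eq_singleton_iff, eq_comm] at hnbr

lemma reachable_reconfigured_of_walk {u w : V} (p : T.Walk u w) (hp : ∀ x ∈ p.support, x ∉ L) :
    (reconfigured T L σ).Reachable u w := by
  induction p with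
  | nil => rfl
  | cons h p ih =>
    simp only [Walk.support_cons, List.mem_cons, forall_eq_or_imp] at hp
    exact ((reconfigured_adj_of_notMem hp.1 (hp.2 _ p.start_mem_support)).mpr h).reachable.trans
      (ih hp.2)

lemma reconfigured_connected (hT : T.Connected) (hleaf : ∀ v ∈ L, (T.neighborSet v).ncard = 1)
    (hσ : ∀ v ∈ L, σ v ∉ L) : (reconfigured T L σ).Connected := by
  have : Nonempty V := hT.nonempty
  have hout : ∀ v, ∃ v' ∉ L, (reconfigured T L σ).Reachable v v' := by
    intro v
    by_cases hv : v ∈ L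
    · refine ⟨σ v, hσ v hv, Adj.reachable ?_⟩
      rw [← mem_neighborSet, neighborSet_reconfigured_of_mem hσ hv]
      rfl
    · exact ⟨v, hv, .refl v⟩
  refine .mk fun u w => ?_
  obtain ⟨u', hu'L, hu⟩ := hout u
  obtain ⟨w', hw'L, hw⟩ := hout w
  obtain ⟨p, hp⟩ := hT.exists_isPath u' w'
  have hpL : ∀ x ∈ p.support, x ∉ L := fun x hx hxL => by
    rcases hp.eq_or_eq_of_ncard_neighborSet_eq_one hx (hleaf x hxL) with rfl | rfl <;>
      contradiction
  exact hu.trans ((reachable_reconfigured_of_walk p hpL).trans hw.symm)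

lemma reconfigured_isAcyclic (hT : T.IsAcyclic) (hσ : ∀ v ∈ L, σ v ∉ L) :
    (reconfigured T L σ).IsAcyclic := by
  intro u c hc
  have hcL : ∀ x ∈ c.support, x ∉ L := fun x hx hxL => hc.ncard_neighborSet_ne_one hx <| by
    rw [neighborSet_reconfigured_of_mem hσ hxL, Set.ncard_singleton]
  have hedges : ∀ e ∈ c.edges, e ∈ T.edgeSet := by
    intro e he
    induction e with
    | h x y =>
      exact (reconfigured_adj_of_notMem (hcL x (c.fst_mem_support_of_mem_edges he))
        (hcL y (c.snd_mem_support_of_mem_edges he))).mp (c.edges_subset_edgeSet he)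
  exact hT (c.transfer T hedges) (hc.transfer hedges)

lemma reconfigured_isTree (hT : T.IsTree) (hleaf : ∀ v ∈ L, (T.neighborSet v).ncard = 1)
    (hσ : ∀ v ∈ L, σ v ∉ L) : (reconfigured T L σ).IsTree :=
  ⟨reconfigured_connected hT.connected hleaf hσ, reconfigured_isAcyclic hT.isAcyclic hσ⟩

end Reconfigured

def reconfigurations {V : Type} (T : SimpleGraph V) (LP : Set V × (V → Set V)) :
    Set (SimpleGraph V) :=
  reconfigured T LP.1 '' {σ | IsParentChoice LP σ}

namespace IsLeafSelection

variable {V : Type} {G T : SimpleGraph V} {LP : Set V × (V → Set V)}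

lemma notMem_of_isParentChoice (h : IsLeafSelection G T LP) {σ : V → V}
    (hσ : IsParentChoice LP σ) : ∀ v ∈ LP.1, σ v ∉ LP.1 :=
  fun v hv => ((h v hv).2.2 (hσ.1 v hv)).2

lemma adj_of_isParentChoice (h : IsLeafSelection G T LP) {σ : V → V}
    (hσ : IsParentChoice LP σ) : ∀ v ∈ LP.1, G.Adj v (σ v) :=
  fun v hv => ((h v hv).2.2 (hσ.1 v hv)).1

lemma exists_isParentChoice_reconfigured_eq_self (h : IsLeafSelection G T LP) :
    ∃ τ, IsParentChoice LP τ ∧ reconfigured T LP.1 τ = T := by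
  have hpar : ∀ v, ∃ a, (v ∈ LP.1 → T.neighborSet v = {a}) ∧ (v ∉ LP.1 → a = v) := by
    intro v
    by_cases hv : v ∈ LP.1
    · obtain ⟨a, ha⟩ := Set.ncard_eq_one.mp (h v hv).1
      exact ⟨a, fun _ => ha, absurd hv⟩
    · exact ⟨v, fun hv' => absurd hv' hv, fun _ => rfl⟩
  choose τ hτ using hpar
  refine ⟨τ, ⟨fun v hv => (h v hv).2.1 ?_, fun v hv => (hτ v).2 hv⟩,
    reconfigured_eq_self fun v hv => (hτ v).1 hv⟩
  rw [(hτ v).1 hv]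
  rfl

lemma isParentChoice_nonempty (h : IsLeafSelection G T LP) : {σ | IsParentChoice LP σ}.Nonempty :=
  let ⟨τ, hτ, _⟩ := h.exists_isParentChoice_reconfigured_eq_self
  ⟨τ, hτ⟩

lemma reconfigured_injOn {T₀ : SimpleGraph V} (h : IsLeafSelection G T₀ LP) :
    Set.InjOn (reconfigured T LP.1) {σ | IsParentChoice LP σ} := by
  intro σ hσ τ hτ heq
  funext v
  by_cases hv : v ∈ LP.1
  · exact eqOn_of_reconfigured_eq (h.notMem_of_isParentChoice hσ)
      (h.notMem_of_isParentChoice hτ) heq hv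
  · rw [hσ.2 v hv, hτ.2 v hv]

lemma reconfigurations_subset (hTG : T ≤ G) (hT : T.IsTree) (h : IsLeafSelection G T LP) :
    reconfigurations T LP ⊆ {T' | T' ≤ G ∧ T'.IsTree} := by
  rintro _ ⟨σ, hσ, rfl⟩
  exact ⟨reconfigured_le hTG (h.adj_of_isParentChoice hσ),
    reconfigured_isTree hT (fun v hv => (h v hv).1) (h.notMem_of_isParentChoice hσ)⟩

lemma ncard_reconfigurations (h : IsLeafSelection G T LP) :
    (reconfigurations T LP).ncard = {σ | IsParentChoice LP σ}.ncard :=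
  h.reconfigured_injOn.ncard_image

open Classical in
lemma ncard_isParentChoice_reconfigured_eq (h : IsLeafSelection G T LP) (T' : SimpleGraph V) :
    {σ | IsParentChoice LP σ ∧ reconfigured T LP.1 σ = T'}.ncard =
      if T' ∈ reconfigurations T LP then 1 else 0 := by
  split_ifs with hT'
  · obtain ⟨σ, hσ, rfl⟩ := hT'
    refine Set.ncard_eq_one.mpr ⟨σ, Set.ext fun τ => ⟨?_, ?_⟩⟩
    · exact fun ⟨hτ, heq⟩ => h.reconfigured_injOn hτ hσ heq
    · rintro rfl
      exact ⟨hσ, rfl⟩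
  · have hempty : {σ | IsParentChoice LP σ ∧ reconfigured T LP.1 σ = T'} = ∅ :=
      Set.eq_empty_of_forall_notMem fun σ hσ => hT' ⟨σ, hσ⟩
    rw [hempty, Set.ncard_empty]

lemma mem_reconfigurations_symm (h : IsLeafSelection G T LP) {T' : SimpleGraph V}
    (hT' : T' ∈ reconfigurations T LP) : T ∈ reconfigurations T' LP := by
  obtain ⟨σ, -, rfl⟩ := hT'
  obtain ⟨τ, hτ, hτT⟩ := h.exists_isParentChoice_reconfigured_eq_self
  exact ⟨τ, hτ, by rw [reconfigured_reconfigured, hτT]⟩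

end IsLeafSelection

structure IsReversibleStrategy {V Ω : Type} (G : SimpleGraph V)
    (S : SimpleGraph V → Ω → Set V × (V → Set V)) : Prop where
  isLeafSelection : ∀ T : SimpleGraph V, T ≤ G → T.IsTree → ∀ R : Ω, IsLeafSelection G T (S T R)
  reversible : ∀ T : SimpleGraph V, T ≤ G → T.IsTree → ∀ R : Ω, ∀ σ : V → V,
    IsParentChoice (S T R) σ → S (reconfigured T (S T R).1 σ) R = S T R

namespace IsReversibleStrategy

variable {V Ω : Type} {G : SimpleGraph V} {S : SimpleGraph V → Ω → Set V × (V → Set V)}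
  {T T' : SimpleGraph V} {R : Ω}

lemma eq_of_mem_reconfigurations (hS : IsReversibleStrategy G S) (hTG : T ≤ G) (hT : T.IsTree)
    (hT' : T' ∈ reconfigurations T (S T R)) : S T' R = S T R := by
  obtain ⟨σ, hσ, rfl⟩ := hT'
  exact hS.reversible T hTG hT R σ hσ

lemma mem_reconfigurations_of_mem (hS : IsReversibleStrategy G S) (hTG : T ≤ G)
    (hT : T.IsTree) (hT' : T' ∈ reconfigurations T (S T R)) :
    T ∈ reconfigurations T' (S T' R) := by
  rw [hS.eq_of_mem_reconfigurations hTG hT hT']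
  exact (hS.isLeafSelection T hTG hT R).mem_reconfigurations_symm hT'

lemma mem_reconfigurations_comm (hS : IsReversibleStrategy G S) (hTG : T ≤ G) (hT : T.IsTree)
    (hT'G : T' ≤ G) (hT' : T'.IsTree) :
    T' ∈ reconfigurations T (S T R) ↔ T ∈ reconfigurations T' (S T' R) :=
  ⟨hS.mem_reconfigurations_of_mem hTG hT, hS.mem_reconfigurations_of_mem hT'G hT'⟩

open Classical in
lemma transition_ratio_eq (hS : IsReversibleStrategy G S) (hTG : T ≤ G) (hT : T.IsTree)
    (hT'G : T' ≤ G) (hT' : T'.IsTree) (R : Ω) :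
    ({σ | IsParentChoice (S T R) σ ∧ reconfigured T (S T R).1 σ = T'}.ncard : ℝ) /
        {σ | IsParentChoice (S T R) σ}.ncard =
      (if T ∈ reconfigurations T' (S T' R) then 1 else 0) /
        {σ | IsParentChoice (S T' R) σ}.ncard := by
  have hcomm := hS.mem_reconfigurations_comm hTG hT hT'G hT' (R := R)
  rw [(hS.isLeafSelection T hTG hT R).ncard_isParentChoice_reconfigured_eq, Nat.cast_ite,
    Nat.cast_one, Nat.cast_zero]
  by_cases h : T' ∈ reconfigurations T (S T R)
  · rw [if_pos h, if_pos (hcomm.mp h), hS.eq_of_mem_reconfigurations hTG hT h]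
  · rw [if_neg h, if_neg (mt hcomm.mpr h), zero_div, zero_div]

lemma sum_transition_ratio_eq_one [Finite V] (hS : IsReversibleStrategy G S) (hT'G : T' ≤ G)
    (hT' : T'.IsTree) (R : Ω) :
    ∑ T ∈ (Set.toFinite {T : SimpleGraph V | T ≤ G ∧ T.IsTree}).toFinset,
      ({σ | IsParentChoice (S T R) σ ∧ reconfigured T (S T R).1 σ = T'}.ncard : ℝ) /
        {σ | IsParentChoice (S T R) σ}.ncard = 1 := by
  classical
  have hLP := hS.isLeafSelection T' hT'G hT' R
  have hpos : 0 < {σ | IsParentChoice (S T' R) σ}.ncard :=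
    (Set.ncard_pos (Set.toFinite _)).mpr hLP.isParentChoice_nonempty
  have hcard : ((Set.toFinite {T : SimpleGraph V | T ≤ G ∧ T.IsTree}).toFinset.filter
      (· ∈ reconfigurations T' (S T' R))).card = {σ | IsParentChoice (S T' R) σ}.ncard := by
    rw [← hLP.ncard_reconfigurations, ← Set.ncard_coe_finset, Finset.coe_filter]
    congr 1
    ext T
    simpa using fun hT => hLP.reconfigurations_subset hT'G hT' hT
  rw [Finset.sum_congr rfl fun T hT =>
      hS.transition_ratio_eq (Set.Finite.mem_toFinset _ |>.mp hT).1
        (Set.Finite.mem_toFinset _ |>.mp hT).2 hT'G hT' R,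
    ← Finset.sum_div, Finset.sum_boole, hcard, div_self (Nat.cast_ne_zero.mpr hpos.ne')]

end IsReversibleStrategy

theorem reversible_strategy_preserves_uniformity_general
    (V : Type) [Fintype V] (G : SimpleGraph V)
    (Ω : Type) [Fintype Ω] (μ : Ω → ℝ) (hμ1 : ∑ R : Ω, μ R = 1)
    (S : SimpleGraph V → Ω → Set V × (V → Set V))
    (hsel : ∀ T : SimpleGraph V, T ≤ G → T.IsTree → ∀ R : Ω, IsLeafSelection G T (S T R))
    (hrev : ∀ T : SimpleGraph V, T ≤ G → T.IsTree → ∀ R : Ω, ∀ σ : V → V,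
      IsParentChoice (S T R) σ → S (reconfigured T (S T R).1 σ) R = S T R)
    (T' : SimpleGraph V) (hT'le : T' ≤ G) (hT' : T'.IsTree) :
    (∑ᶠ T ∈ {T : SimpleGraph V | T ≤ G ∧ T.IsTree}, ∑ R : Ω, μ R *
          (({σ : V → V | IsParentChoice (S T R) σ ∧
              reconfigured T (S T R).1 σ = T'}.ncard : ℝ) /
            ({σ : V → V | IsParentChoice (S T R) σ}.ncard : ℝ))) /
        ({T : SimpleGraph V | T ≤ G ∧ T.IsTree}.ncard : ℝ) =
      1 / ({T : SimpleGraph V | T ≤ G ∧ T.IsTree}.ncard : ℝ) := by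
  have hS : IsReversibleStrategy G S := ⟨hsel, hrev⟩
  congr 1
  rw [finsum_mem_eq_finite_toFinset_sum _ (Set.toFinite _), Finset.sum_comm]
  simp_rw [← Finset.mul_sum, hS.sum_transition_ratio_eq_one hT'le hT', mul_one]
  exact hμ1

/-- Let `G` be a connected graph, let `𝒯` be a uniformly random spanning tree of `G`,
and let `S` be a reversible leaf reconfiguration strategy whose random input `𝓡` (with
values in `Ω`, distributed according to `μ`) is independent of `𝒯`. If `𝒯'` is obtained
from `𝒯` by a uniformly random `S(𝒯,𝓡)`-leaf reconfiguration, then `𝒯'` is a uniformly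
random spanning tree of `G`: for every spanning tree `T'` of `G`, `ℙ(𝒯' = T') = 1/(number
of spanning trees)`. Here `ℙ(𝒯' = T')` is written out as
`(1/#spanning trees) · Σ_T Σ_R μ(R) · ℙ(T → T' under a uniform S(T,R)-reconfiguration)`,
the inner probability being a ratio of counts of parent-choice functions. -/
theorem reversible_strategy_preserves_uniformity
    (V : Type) [Fintype V] [DecidableEq V] (G : SimpleGraph V) (hG : G.Connected)
    (Ω : Type) [Fintype Ω] (μ : Ω → ℝ) (hμ0 : ∀ R, 0 ≤ μ R) (hμ1 : ∑ R : Ω, μ R = 1)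
    (S : SimpleGraph V → Ω → Set V × (V → Set V))
    (hsel : ∀ T : SimpleGraph V, T ≤ G → T.IsTree → ∀ R : Ω, IsLeafSelection G T (S T R))
    (hrev : ∀ T : SimpleGraph V, T ≤ G → T.IsTree → ∀ R : Ω, ∀ σ : V → V,
      IsParentChoice (S T R) σ → S (reconfigured T (S T R).1 σ) R = S T R)
    (T' : SimpleGraph V) (hT'le : T' ≤ G) (hT' : T'.IsTree) :
    (∑ᶠ T ∈ {T : SimpleGraph V | T ≤ G ∧ T.IsTree}, ∑ R : Ω, μ R *
          (({σ : V → V | IsParentChoice (S T R) σ ∧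
              reconfigured T (S T R).1 σ = T'}.ncard : ℝ) /
            ({σ : V → V | IsParentChoice (S T R) σ}.ncard : ℝ))) /
        ({T : SimpleGraph V | T ≤ G ∧ T.IsTree}.ncard : ℝ) =
      1 / ({T : SimpleGraph V | T ≤ G ∧ T.IsTree}.ncard : ℝ) :=
  reversible_strategy_preserves_uniformity_general V G Ω μ hμ1 S hsel hrev T' hT'le hT'
end

section
/- Let G be a connected graph with n vertices, and let 𝒮 be the leaf reconfiguration strategy defined as follows. Given a spanning tree T of G and a set R ⊆ V(G), let P₁(v) := {u ∈ N_G(v) : u ∉ R or d_G(u) > n^{1/3}}, P₂(v) := {u ∈ N_G(v) : u ∉ R or |N_T(u) \ R| ≥ 2}, L₁ := {v ∈ L(T) ∩ R : d_G(v) ≤ n^{1/3}, p_T(v) ∈ P₁(v), and |P₁(v)| ≥ d_G(v)/2}, L₂ := {v ∈ L(T) ∩ R : d_G(v) > n^{1/3}, p_T(v) ∈ P₂(v), and |P₂(v)| ≥ d_G(v)/4}, and set 𝒮(T,R) := (L₁,P₁) if |L₁| ≥ n/256 and 𝒮(T,R) := (L₂,P₂) otherwise. Then 𝒮 is reversible: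 for every spanning tree T, every R ⊆ V(G), and every spanning tree T' obtainable from T by an 𝒮(T,R)-leaf reconfiguration, it holds that 𝒮(T',R) = 𝒮(T,R). -/
open scoped Classical

/-- `P₁(v) = {u ∈ N_G(v) : u ∉ R or d_G(u) > n^{1/3}}`. -/
noncomputable def P1 {V : Type} [Fintype V] (G : SimpleGraph V) (R : Set V) (v : V) :
    Set V :=
  {u ∈ G.neighborSet v |
    u ∉ R ∨ (Fintype.card V : ℝ) ^ ((3 : ℝ)⁻¹) < ((G.neighborSet u).ncard : ℝ)}

/-- `P₂(v) = {u ∈ N_G(v) : u ∉ R or |N_T(u) \ R| ≥ 2}`. -/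
noncomputable def P2 {V : Type} [Fintype V] (G T : SimpleGraph V) (R : Set V) (v : V) :
    Set V :=
  {u ∈ G.neighborSet v | u ∉ R ∨ 2 ≤ (T.neighborSet u \ R).ncard}

/-- `L₁ = {v ∈ L(T) ∩ R : d_G(v) ≤ n^{1/3}, p_T(v) ∈ P₁(v), |P₁(v)| ≥ d_G(v)/2}`; being
a leaf with `p_T(v) ∈ P₁(v)` is encoded as `|N_T(v)| = 1` and `N_T(v) ⊆ P₁(v)`. -/
noncomputable def L1 {V : Type} [Fintype V] (G T : SimpleGraph V) (R : Set V) : Set V :=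
  {v | (T.neighborSet v).ncard = 1 ∧ v ∈ R ∧
    ((G.neighborSet v).ncard : ℝ) ≤ (Fintype.card V : ℝ) ^ ((3 : ℝ)⁻¹) ∧
    T.neighborSet v ⊆ P1 G R v ∧
    ((G.neighborSet v).ncard : ℝ) / 2 ≤ ((P1 G R v).ncard : ℝ)}

/-- `L₂ = {v ∈ L(T) ∩ R : d_G(v) > n^{1/3}, p_T(v) ∈ P₂(v), |P₂(v)| ≥ d_G(v)/4}`. -/
noncomputable def L2 {V : Type} [Fintype V] (G T : SimpleGraph V) (R : Set V) : Set V :=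
  {v | (T.neighborSet v).ncard = 1 ∧ v ∈ R ∧
    (Fintype.card V : ℝ) ^ ((3 : ℝ)⁻¹) < ((G.neighborSet v).ncard : ℝ) ∧
    T.neighborSet v ⊆ P2 G T R v ∧
    ((G.neighborSet v).ncard : ℝ) / 4 ≤ ((P2 G T R v).ncard : ℝ)}

/-- The leaf reconfiguration strategy `𝒮(T,R)`, equal to `(L₁, P₁)` if `|L₁| ≥ n/256`
and to `(L₂, P₂)` otherwise. -/
noncomputable def strat {V : Type} [Fintype V] (G T : SimpleGraph V) (R : Set V) :
    Set V × (V → Set V) :=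
  if (Fintype.card V : ℝ) / 256 ≤ ((L1 G T R).ncard : ℝ) then (L1 G T R, P1 G R)
  else (L2 G T R, P2 G T R)

section Aux

variable {V : Type} [Fintype V]

lemma reconf_adj (T : SimpleGraph V) (L : Set V) (σ : V → V) (x y : V) :
    (reconfigured T L σ).Adj x y ↔ x ≠ y ∧
      ((T.Adj x y ∧ x ∉ L ∧ y ∉ L) ∨ (x ∈ L ∧ y = σ x) ∨ (y ∈ L ∧ x = σ y)) := by
  simp only [reconfigured, SimpleGraph.fromRel_adj]
  constructor
  · rintro ⟨hne, (⟨ha, hx, hy⟩ | ⟨hx, hy⟩) | (⟨ha, hy, hx⟩ | ⟨hy, hx⟩)⟩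
    exacts [⟨hne, Or.inl ⟨ha, hx, hy⟩⟩, ⟨hne, Or.inr (Or.inl ⟨hx, hy⟩)⟩,
      ⟨hne, Or.inl ⟨ha.symm, hx, hy⟩⟩, ⟨hne, Or.inr (Or.inr ⟨hy, hx⟩)⟩]
  · rintro ⟨hne, ⟨ha, hx, hy⟩ | ⟨hx, hy⟩ | ⟨hy, hx⟩⟩
    exacts [⟨hne, Or.inl (Or.inl ⟨ha, hx, hy⟩)⟩, ⟨hne, Or.inl (Or.inr ⟨hx, hy⟩)⟩,
      ⟨hne, Or.inr (Or.inr ⟨hy, hx⟩)⟩]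

lemma nbhd_of_mem (T : SimpleGraph V) (L : Set V) (σ : V → V)
    (hσL : ∀ w ∈ L, σ w ∉ L) {v : V} (hv : v ∈ L) (hne : σ v ≠ v) :
    (reconfigured T L σ).neighborSet v = {σ v} := by
  ext y
  simp only [SimpleGraph.mem_neighborSet, reconf_adj, Set.mem_singleton_iff]
  constructor
  · rintro ⟨hne', (⟨_, hx, _⟩ | ⟨_, rfl⟩ | ⟨hy, hx⟩)⟩
    · exact absurd hv hx
    · rfl
    · exact absurd (hx ▸ hv) (hσL y hy)
  · rintro rfl
    exact ⟨hne.symm, Or.inr (Or.inl ⟨hv, rfl⟩)⟩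

lemma nbhd_of_not_mem (T : SimpleGraph V) (L : Set V) (σ : V → V)
    {u : V} (hu : u ∉ L) :
    (reconfigured T L σ).neighborSet u = (T.neighborSet u \ L) ∪ {w ∈ L | σ w = u} := by
  ext y
  simp only [SimpleGraph.mem_neighborSet, reconf_adj, Set.mem_union, Set.mem_diff,
    Set.mem_setOf_eq]
  constructor
  · rintro ⟨hne, (⟨ha, _, hy⟩ | ⟨hx, _⟩ | ⟨hy, hx⟩)⟩
    · exact Or.inl ⟨ha, hy⟩
    · exact absurd hx hu
    · exact Or.inr ⟨hy, hx.symm⟩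
  · rintro (⟨ha, hy⟩ | ⟨hy, hs⟩)
    · exact ⟨ha.ne, Or.inl ⟨ha, hu, hy⟩⟩
    · exact ⟨fun h => hu (h ▸ hy), Or.inr (Or.inr ⟨hy, hs.symm⟩)⟩

variable (G T : SimpleGraph V) (R : Set V)

lemma mem_P1 (v u : V) :
    u ∈ P1 G R v ↔ u ∈ G.neighborSet v ∧
      (u ∉ R ∨ (Fintype.card V : ℝ) ^ ((3 : ℝ)⁻¹) < ((G.neighborSet u).ncard : ℝ)) :=
  Iff.rfl

lemma mem_P2 (v u : V) :
    u ∈ P2 G T R v ↔ u ∈ G.neighborSet v ∧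
      (u ∉ R ∨ 2 ≤ (T.neighborSet u \ R).ncard) :=
  Iff.rfl

lemma not_mem_P1 {w : V} (hw : w ∈ R)
    (hd : ((G.neighborSet w).ncard : ℝ) ≤ (Fintype.card V : ℝ) ^ ((3 : ℝ)⁻¹)) (v : V) :
    w ∉ P1 G R v := by
  rintro ⟨-, h | h⟩
  · exact h hw
  · exact absurd hd (not_le.2 h)

lemma not_mem_P2 {w : V} (hw : w ∈ R) (hd : (T.neighborSet w).ncard = 1) (v : V) :
    w ∉ P2 G T R v := by
  rintro ⟨-, h | h⟩
  · exact h hw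
  · have := Set.ncard_le_ncard (Set.diff_subset (s := T.neighborSet w) (t := R))
      (Set.toFinite _)
    omega

lemma L1_not_mem_P1 {w : V} (hw : w ∈ L1 G T R) (v : V) : w ∉ P1 G R v :=
  not_mem_P1 G R hw.2.1 hw.2.2.1 v

lemma L2_not_mem_P2 {w : V} (hw : w ∈ L2 G T R) (v : V) : w ∉ P2 G T R v :=
  not_mem_P2 G T R hw.2.1 hw.1 v

end Aux

section Main

set_option linter.unusedSectionVars false

variable {V : Type} [Fintype V] (G T : SimpleGraph V) (R : Set V) (σ : V → V)

/-- Case 1: `L1` is preserved by an `(L1, P1)`-reconfiguration. -/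
lemma L1_reconf_L1 (hσ : ∀ v ∈ L1 G T R, σ v ∈ P1 G R v) :
    L1 G (reconfigured T (L1 G T R) σ) R = L1 G T R := by
  have hσL : ∀ w ∈ L1 G T R, σ w ∉ L1 G T R := fun w hw hm =>
    L1_not_mem_P1 G T R hm w (hσ w hw)
  have hσne : ∀ w ∈ L1 G T R, σ w ≠ w := fun w hw =>
    (SimpleGraph.mem_neighborSet G w (σ w) |>.mp (hσ w hw).1).ne'
  ext v
  constructor
  · rintro ⟨h1, h2, h3, h4, h5⟩
    by_cases hv : v ∈ L1 G T R
    · exact hv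
    exfalso
    have hN : (reconfigured T (L1 G T R) σ).neighborSet v =
        (T.neighborSet v \ L1 G T R) ∪ {w ∈ L1 G T R | σ w = v} :=
      nbhd_of_not_mem T _ σ hv
    by_cases hS : ∃ w ∈ L1 G T R, σ w = v
    · obtain ⟨w, hw, hwv⟩ := hS
      have hwm : w ∈ (reconfigured T (L1 G T R) σ).neighborSet v := by
        rw [hN]; exact Or.inr ⟨hw, hwv⟩
      exact L1_not_mem_P1 G T R hw v (h4 hwm)
    · have hNd : T.neighborSet v ∩ L1 G T R = ∅ := by
        ext u
        simp only [Set.mem_inter_iff, Set.mem_empty_iff_false, iff_false, not_and]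
        intro hu hu'
        have : v ∈ P1 G R u := hu'.2.2.2.1 ((T.adj_comm v u).mp hu)
        exact not_mem_P1 G R h2 h3 u this
      have hN' : (reconfigured T (L1 G T R) σ).neighborSet v = T.neighborSet v := by
        rw [hN]
        have hSe : {w ∈ L1 G T R | σ w = v} = (∅ : Set V) := by
          ext w
          simp only [Set.mem_setOf_eq, Set.mem_empty_iff_false, iff_false, not_and]
          exact fun hw hwv => hS ⟨w, hw, hwv⟩
        rw [hSe, Set.union_empty]
        ext u
        simp only [Set.mem_diff, and_iff_left_iff_imp]
        exact fun hu hu' => Set.eq_empty_iff_forall_notMem.mp hNd u ⟨hu, hu'⟩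
      rw [hN'] at h1 h4
      exact hv ⟨h1, h2, h3, h4, h5⟩
  · rintro ⟨h1, h2, h3, h4, h5⟩
    have hv : v ∈ L1 G T R := ⟨h1, h2, h3, h4, h5⟩
    have hN : (reconfigured T (L1 G T R) σ).neighborSet v = {σ v} :=
      nbhd_of_mem T _ σ hσL hv (hσne v hv)
    refine ⟨by rw [hN]; exact Set.ncard_singleton _, h2, h3, ?_, h5⟩
    rw [hN]
    simpa using hσ v hv

end Main

section Main2

set_option linter.unusedSectionVars false

variable {V : Type} [Fintype V] (G T : SimpleGraph V) (R : Set V) (σ : V → V)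

lemma diffR_subset {v : V} (hv : v ∉ L2 G T R) :
    T.neighborSet v \ R ⊆ (reconfigured T (L2 G T R) σ).neighborSet v := by
  intro y hy
  rw [nbhd_of_not_mem T _ σ hv]
  exact Or.inl ⟨hy.1, fun h => hy.2 h.2.1⟩

lemma reconf2_nbhd (hσ : ∀ v ∈ L2 G T R, σ v ∈ P2 G T R v) {v : V} (h2 : v ∈ R)
    (hv : v ∉ L2 G T R) :
    (reconfigured T (L2 G T R) σ).neighborSet v = T.neighborSet v ∨
      2 ≤ (T.neighborSet v \ R).ncard := by
  by_cases hS : ∃ w ∈ L2 G T R, σ w = v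
  · obtain ⟨w, hw, hwv⟩ := hS
    right
    have hm := hσ w hw
    rw [hwv] at hm
    rcases hm.2 with h | h
    · exact absurd h2 h
    · exact h
  by_cases hI : ∃ u ∈ T.neighborSet v, u ∈ L2 G T R
  · obtain ⟨u, hu, hu2⟩ := hI
    right
    have hvu : v ∈ P2 G T R u := hu2.2.2.2.1 ((T.adj_comm v u).mp hu)
    rcases hvu.2 with h | h
    · exact absurd h2 h
    · exact h
  · left
    rw [nbhd_of_not_mem T _ σ hv]
    have hSe : {w ∈ L2 G T R | σ w = v} = (∅ : Set V) := by
      ext w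
      simp only [Set.mem_setOf_eq, Set.mem_empty_iff_false, iff_false, not_and]
      exact fun hw hwv => hS ⟨w, hw, hwv⟩
    rw [hSe, Set.union_empty]
    ext u
    simp only [Set.mem_diff, and_iff_left_iff_imp]
    exact fun hu hu2 => hI ⟨u, hu, hu2⟩

lemma P2_reconf (hσ : ∀ v ∈ L2 G T R, σ v ∈ P2 G T R v) :
    P2 G (reconfigured T (L2 G T R) σ) R = P2 G T R := by
  have key : ∀ u : V,
      (u ∉ R ∨ 2 ≤ ((reconfigured T (L2 G T R) σ).neighborSet u \ R).ncard)
      ↔ (u ∉ R ∨ 2 ≤ (T.neighborSet u \ R).ncard) := by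
    intro u
    by_cases hu : u ∈ R
    swap
    · simp [hu]
    simp only [hu, not_true_eq_false, false_or]
    by_cases huL : u ∈ L2 G T R
    · have hσL : ∀ w ∈ L2 G T R, σ w ∉ L2 G T R := fun w hw hm =>
        L2_not_mem_P2 G T R hm w (hσ w hw)
      have hσne : σ u ≠ u := ((hσ u huL).1 : G.Adj u (σ u)).ne'
      have hN := nbhd_of_mem T _ σ hσL huL hσne
      have c1 : ((reconfigured T (L2 G T R) σ).neighborSet u \ R).ncard ≤ 1 := by
        rw [hN]
        calc ({σ u} \ R : Set V).ncard ≤ ({σ u} : Set V).ncard :=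
              Set.ncard_le_ncard Set.diff_subset (Set.toFinite _)
          _ = 1 := Set.ncard_singleton _
      have c2 : (T.neighborSet u \ R).ncard ≤ 1 := by
        have h := Set.ncard_le_ncard (Set.diff_subset (s := T.neighborSet u) (t := R))
          (Set.toFinite _)
        have := huL.1
        omega
      omega
    · rcases reconf2_nbhd G T R σ hσ hu huL with hE | hE
      · rw [hE]
      · have hsub : T.neighborSet u \ R ⊆
            (reconfigured T (L2 G T R) σ).neighborSet u \ R := fun y hy =>
          ⟨diffR_subset G T R σ huL hy, hy.2⟩
        have := Set.ncard_le_ncard hsub (Set.toFinite _)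
        constructor <;> intro <;> omega
  funext v
  ext u
  exact and_congr_right fun _ => key u

lemma L2_reconf (hσ : ∀ v ∈ L2 G T R, σ v ∈ P2 G T R v) :
    L2 G (reconfigured T (L2 G T R) σ) R = L2 G T R := by
  have hP2 := P2_reconf G T R σ hσ
  have hσL : ∀ w ∈ L2 G T R, σ w ∉ L2 G T R := fun w hw hm =>
    L2_not_mem_P2 G T R hm w (hσ w hw)
  have hσne : ∀ w ∈ L2 G T R, σ w ≠ w := fun w hw =>
    ((hσ w hw).1 : G.Adj w (σ w)).ne'
  ext v
  constructor
  · rintro ⟨h1, h2, h3, h4, h5⟩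
    rw [hP2] at h4 h5
    by_cases hv : v ∈ L2 G T R
    · exact hv
    rcases reconf2_nbhd G T R σ hσ h2 hv with hE | hE
    · rw [hE] at h1 h4
      exact ⟨h1, h2, h3, h4, h5⟩
    · exfalso
      have h6 := Set.ncard_le_ncard (diffR_subset G T R σ (v := v) hv) (Set.toFinite _)
      omega
  · rintro ⟨h1, h2, h3, h4, h5⟩
    have hv : v ∈ L2 G T R := ⟨h1, h2, h3, h4, h5⟩
    have hN := nbhd_of_mem T _ σ hσL hv (hσne v hv)
    refine ⟨by rw [hN]; exact Set.ncard_singleton _, h2, h3, ?_, ?_⟩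
    · rw [hN, hP2]
      simpa using hσ v hv
    · rw [hP2]
      exact h5

lemma L1_reconf_L2 (hσ : ∀ v ∈ L2 G T R, σ v ∈ P2 G T R v) :
    L1 G (reconfigured T (L2 G T R) σ) R = L1 G T R := by
  ext v
  constructor
  · rintro ⟨h1, h2, h3, h4, h5⟩
    have hv2 : v ∉ L2 G T R := fun hv => absurd h3 (not_le.2 hv.2.2.1)
    rcases reconf2_nbhd G T R σ hσ h2 hv2 with hE | hE
    · rw [hE] at h1 h4
      exact ⟨h1, h2, h3, h4, h5⟩
    · exfalso
      have h6 := Set.ncard_le_ncard (diffR_subset G T R σ (v := v) hv2) (Set.toFinite _)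
      omega
  · rintro ⟨h1, h2, h3, h4, h5⟩
    have hv2 : v ∉ L2 G T R := fun hv => absurd h3 (not_le.2 hv.2.2.1)
    rcases reconf2_nbhd G T R σ hσ h2 hv2 with hE | hE
    · refine ⟨?_, h2, h3, ?_, h5⟩ <;> rw [hE] <;> assumption
    · exfalso
      have h6 := Set.ncard_le_ncard (Set.diff_subset (s := T.neighborSet v) (t := R))
        (Set.toFinite _)
      omega

end Main2

/-- The leaf reconfiguration strategy `𝒮` is reversible: for every spanning tree `T` of
the connected graph `G`, every `R ⊆ V(G)`, and every spanning tree `T'` obtainable from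
`T` by an `𝒮(T,R)`-leaf reconfiguration (i.e. by choosing a new parent `σ v ∈ 𝒮(T,R).2 v`
for each `v ∈ 𝒮(T,R).1`), it holds that `𝒮(T',R) = 𝒮(T,R)`. -/
theorem strat_reversible
    (V : Type) [Fintype V] [DecidableEq V] (G : SimpleGraph V) (hG : G.Connected)
    (T : SimpleGraph V) (hTle : T ≤ G) (hT : T.IsTree) (R : Set V)
    (σ : V → V) (hσ : ∀ v ∈ (strat G T R).1, σ v ∈ (strat G T R).2 v) :
    strat G (reconfigured T (strat G T R).1 σ) R = strat G T R := by
  by_cases hc : (Fintype.card V : ℝ) / 256 ≤ ((L1 G T R).ncard : ℝ)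
  · have hst : strat G T R = (L1 G T R, P1 G R) := by unfold strat; rw [if_pos hc]
    rw [hst] at hσ ⊢
    have hσ' : ∀ v ∈ L1 G T R, σ v ∈ P1 G R v := hσ
    have key := L1_reconf_L1 G T R σ hσ'
    show strat G (reconfigured T (L1 G T R) σ) R = _
    unfold strat
    rw [key, if_pos hc]
  · have hst : strat G T R = (L2 G T R, P2 G T R) := by unfold strat; rw [if_neg hc]
    rw [hst] at hσ ⊢
    have hσ' : ∀ v ∈ L2 G T R, σ v ∈ P2 G T R v := hσ
    have key1 := L1_reconf_L2 G T R σ hσ'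
    have key2 := L2_reconf G T R σ hσ'
    have keyP := P2_reconf G T R σ hσ'
    show strat G (reconfigured T (L2 G T R) σ) R = _
    unfold strat
    rw [key1, if_neg hc, key2, keyP]
end

section
/- Let 0 < c ≤ 1, let d ≥ 8, and let n ≥ 1. Let G be a bipartite graph with n vertices and bipartition V(G) = A ∪ B such that every vertex in A has degree exactly d and |A| = c·n. Suppose B₂ ⊆ B satisfies |B₂| ≤ n^{1/4} and the number of edges between A and B₂ is at least c·d·n/4. Then there exist two distinct vertices v, u ∈ B₂ with |N_G(v) ∩ N_G(u)| ≥ c·d²·n^{1/2}/32. -/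
open Finset

private lemma diag_eq_image' {α : Type*} [DecidableEq α] (s : Finset α) :
    s.diag = s.image fun a => (a, a) := by
  ext ⟨a, b⟩
  simp only [Finset.mem_diag, Finset.mem_image]
  constructor
  · rintro ⟨h1, rfl⟩; exact ⟨a, h1, rfl⟩
  · rintro ⟨x, hx, h⟩; cases h; exact ⟨hx, rfl⟩

private lemma sum_diag' {α M : Type*} [DecidableEq α] [AddCommMonoid M]
    (s : Finset α) (g : α × α → M) :
    ∑ p ∈ s.diag, g p = ∑ v ∈ s, g (v, v) := by
  rw [diag_eq_image', Finset.sum_image]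
  intro x _ y _ h
  exact (Prod.mk.injEq _ _ _ _ ▸ h).1

set_option maxHeartbeats 1000000 in
/-- Let `0 < c ≤ 1`, `d ≥ 8` and `n ≥ 1`. Let `G` be a bipartite graph with `n` vertices
and bipartition `V(G) = A ∪ B` such that every vertex in `A` has degree exactly `d` and
`|A| = c·n`. Suppose `B₂ ⊆ B` satisfies `|B₂| ≤ n^{1/4}` and the number of edges between
`A` and `B₂` is at least `c·d·n/4`. Then there exist two distinct vertices `v, u ∈ B₂`
with `|N_G(v) ∩ N_G(u)| ≥ c·d²·n^{1/2}/32`. (The number of edges between `A` and `B₂` is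
the number of pairs `(x, y)` with `x ∈ A`, `y ∈ B₂` and `x ~ y`.) -/
theorem exists_pair_with_many_common_neighbours
    (V : Type) [Fintype V] [DecidableEq V] (G : SimpleGraph V)
    (A B : Set V) (c : ℝ) (d : ℕ)
    (hc0 : 0 < c) (hc1 : c ≤ 1) (hd : 8 ≤ d) (hn : 1 ≤ Fintype.card V)
    (hpart : A ∪ B = Set.univ) (hdisj : Disjoint A B)
    (hbip : ∀ x y : V, G.Adj x y → (x ∈ A ∧ y ∈ B) ∨ (x ∈ B ∧ y ∈ A))
    (hdeg : ∀ v ∈ A, (G.neighborSet v).ncard = d)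
    (hA : (A.ncard : ℝ) = c * (Fintype.card V : ℝ))
    (B₂ : Set V) (hB₂ : B₂ ⊆ B)
    (hB₂card : (B₂.ncard : ℝ) ≤ (Fintype.card V : ℝ) ^ ((4 : ℝ)⁻¹))
    (he : c * d * (Fintype.card V : ℝ) / 4 ≤
      ({p : V × V | p.1 ∈ A ∧ p.2 ∈ B₂ ∧ G.Adj p.1 p.2}.ncard : ℝ)) :
    ∃ v ∈ B₂, ∃ u ∈ B₂, v ≠ u ∧
      c * (d : ℝ) ^ 2 * (Fintype.card V : ℝ) ^ ((2 : ℝ)⁻¹) / 32 ≤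
        ((G.neighborSet v ∩ G.neighborSet u).ncard : ℝ) := by
  classical
  set N : ℝ := (Fintype.card V : ℝ) with hN
  have hN1 : (1 : ℝ) ≤ N := by rw [hN]; exact_mod_cast hn
  have hN0 : (0 : ℝ) < N := lt_of_lt_of_le one_pos hN1
  clear_value N
  have hd8 : (8 : ℝ) ≤ (d : ℝ) := by exact_mod_cast hd
  have hdpos : (0 : ℝ) < (d : ℝ) := by linarith
  set A' : Finset V := univ.filter (· ∈ A) with hA'
  set B2 : Finset V := univ.filter (· ∈ B₂) with hB2def
  set f : V → ℕ := fun a => (B2.filter (fun b => G.Adj a b)).card with hf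
  set cn : V → V → ℕ := fun v u => (univ.filter fun a => G.Adj a v ∧ G.Adj a u).card
    with hcn
  -- every neighbour of a vertex of B₂ lies in A
  have hAdjA : ∀ v ∈ B₂, ∀ u, G.Adj u v → u ∈ A := by
    intro v hv u h
    rcases hbip u v h with ⟨hu, _⟩ | ⟨_, hv'⟩
    · exact hu
    · exact ((Set.disjoint_left.mp hdisj hv') (hB₂ hv)).elim
  have hf0 : ∀ a ∉ A, f a = 0 := by
    intro a ha
    simp only [hf, Finset.card_eq_zero, Finset.filter_eq_empty_iff]
    intro b hb
    rw [hB2def, Finset.mem_filter] at hb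
    exact fun hadj => ha (hAdjA b hb.2 a hadj)
  -- the edge count equals ∑ a, f a
  have hecard : {p : V × V | p.1 ∈ A ∧ p.2 ∈ B₂ ∧ G.Adj p.1 p.2}.ncard
      = ∑ a, f a := by
    have hset : {p : V × V | p.1 ∈ A ∧ p.2 ∈ B₂ ∧ G.Adj p.1 p.2}
        = ↑((univ : Finset (V × V)).filter fun p => p.1 ∈ A ∧ p.2 ∈ B₂ ∧ G.Adj p.1 p.2) := by
      ext p; simp
    rw [hset, Set.ncard_coe_finset, Finset.card_filter, Fintype.sum_prod_type]
    refine Finset.sum_congr rfl fun a _ => ?_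
    by_cases ha : a ∈ A
    · simp only [ha, true_and]
      simp only [hf, hB2def, Finset.filter_filter, Finset.card_filter]
    · simp [ha, hf0 a ha]
  -- sums restrict to A'
  have hsum_restrict : ∀ g : ℕ → ℕ, g 0 = 0 → ∑ a, g (f a) = ∑ a ∈ A', g (f a) := by
    intro g hg
    refine (Finset.sum_subset (Finset.subset_univ _) ?_).symm
    intro a _ ha
    rw [hA', Finset.mem_filter] at ha
    push_neg at ha
    rw [hf0 a (ha (Finset.mem_univ a)), hg]
  have hAcard : (A'.card : ℝ) = c * N := by
    have hAeq : A = ↑A' := by ext a; simp [hA']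
    rw [← hA, hAeq, Set.ncard_coe_finset]
  -- indicator reformulations
  have hf_sum : ∀ a, ∑ v ∈ B2, (if G.Adj a v then 1 else 0) = f a := by
    intro a; simp only [hf, Finset.card_filter]
  -- double count: ∑∑ cn = ∑ f²
  have hdouble : ∑ v ∈ B2, ∑ u ∈ B2, cn v u = ∑ a, (f a) ^ 2 := by
    have key : ∀ a : V, (f a) ^ 2
        = ∑ v ∈ B2, ∑ u ∈ B2, ((if G.Adj a v then 1 else 0) * (if G.Adj a u then 1 else 0)) := by
      intro a
      rw [sq, ← hf_sum a, Finset.sum_mul_sum]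
    calc ∑ v ∈ B2, ∑ u ∈ B2, cn v u
        = ∑ v ∈ B2, ∑ u ∈ B2, ∑ a : V,
            ((if G.Adj a v then 1 else 0) * (if G.Adj a u then 1 else 0)) := by
          refine Finset.sum_congr rfl fun v _ => Finset.sum_congr rfl fun u _ => ?_
          simp only [hcn, Finset.card_filter]
          refine Finset.sum_congr rfl fun a _ => ?_
          by_cases h1 : G.Adj a v <;> by_cases h2 : G.Adj a u <;> simp [h1, h2]
      _ = ∑ v ∈ B2, ∑ a : V, ∑ u ∈ B2,
            ((if G.Adj a v then 1 else 0) * (if G.Adj a u then 1 else 0)) :=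
          Finset.sum_congr rfl fun v _ => Finset.sum_comm
      _ = ∑ a : V, ∑ v ∈ B2, ∑ u ∈ B2,
            ((if G.Adj a v then 1 else 0) * (if G.Adj a u then 1 else 0)) :=
          Finset.sum_comm
      _ = ∑ a, (f a) ^ 2 := Finset.sum_congr rfl fun a _ => (key a).symm
  -- diagonal: ∑ cn v v = ∑ f a
  have hdiag : ∑ v ∈ B2, cn v v = ∑ a, f a := by
    calc ∑ v ∈ B2, cn v v
        = ∑ v ∈ B2, ∑ a : V, (if G.Adj a v then 1 else 0) := by
          refine Finset.sum_congr rfl fun v _ => ?_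
          simp only [hcn, Finset.card_filter]
          exact Finset.sum_congr rfl fun a _ => by by_cases h : G.Adj a v <;> simp [h]
      _ = ∑ a : V, ∑ v ∈ B2, (if G.Adj a v then 1 else 0) := Finset.sum_comm
      _ = ∑ a, f a := Finset.sum_congr rfl fun a _ => hf_sum a
  -- off-diagonal sum
  set T : ℕ := ∑ p ∈ B2.offDiag, cn p.1 p.2 with hT
  have hsplit : ∑ a, (f a) ^ 2 = (∑ a, f a) + T := by
    have h1 : ∑ p ∈ B2 ×ˢ B2, cn p.1 p.2 = ∑ v ∈ B2, ∑ u ∈ B2, cn v u := by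
      rw [Finset.sum_product]
    have h2 : ∑ p ∈ B2 ×ˢ B2, cn p.1 p.2
        = ∑ p ∈ B2.diag, cn p.1 p.2 + ∑ p ∈ B2.offDiag, cn p.1 p.2 := by
      rw [← Finset.diag_union_offDiag B2, Finset.sum_union (Finset.disjoint_diag_offDiag B2)]
    have h3 : ∑ p ∈ B2.diag, cn p.1 p.2 = ∑ v ∈ B2, cn v v := sum_diag' B2 _
    rw [← hdouble, ← h1, h2, h3, hdiag]
  -- real arithmetic
  set E : ℝ := ((∑ a, f a : ℕ) : ℝ) with hE
  have heE : c * d * N / 4 ≤ E := by rw [hE, ← hecard]; exact_mod_cast he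
  have hE0 : 0 < E := by nlinarith [mul_pos (mul_pos hc0 hdpos) hN0]
  have hQcast : ((∑ a, (f a) ^ 2 : ℕ) : ℝ) = E + (T : ℝ) := by
    rw [hsplit, Nat.cast_add, ← hE]
  -- Cauchy-Schwarz over A'
  have hcauchy : E ^ 2 ≤ (c * N) * ((∑ a, (f a) ^ 2 : ℕ) : ℝ) := by
    have h1 : (∑ a, f a) = ∑ a ∈ A', f a := hsum_restrict id rfl
    have h2 : (∑ a, (f a) ^ 2) = ∑ a ∈ A', (f a) ^ 2 := hsum_restrict (· ^ 2) rfl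
    have hcs : (∑ a ∈ A', (f a : ℝ)) ^ 2 ≤ (A'.card : ℝ) * ∑ a ∈ A', (f a : ℝ) ^ 2 :=
      sq_sum_le_card_mul_sum_sq
    rw [hE, h1, h2, ← hAcard]
    exact_mod_cast hcs
  clear_value E T
  have hcN : (0 : ℝ) < c * N := mul_pos hc0 hN0
  -- lower bound on T
  have hTlb : c * (d : ℝ) ^ 2 * N / 32 ≤ (T : ℝ) := by
    have key : E ^ 2 - c * N * E ≤ c * N * (T : ℝ) := by
      have h := hcauchy
      rw [hQcast, mul_add] at h
      linarith
    have hEm : c * N * ((d : ℝ) / 8) ≤ E - c * N := by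
      nlinarith [mul_le_mul_of_nonneg_left (show (1 : ℝ) ≤ (d : ℝ) / 8 by linarith) hcN.le]
    have hEE : (c * N * ((d : ℝ) / 4)) * (c * N * ((d : ℝ) / 8)) ≤ E * (E - c * N) := by
      have h1 : c * N * ((d : ℝ) / 4) ≤ E := by nlinarith
      have h2 : (0 : ℝ) ≤ c * N * ((d : ℝ) / 8) := by positivity
      exact mul_le_mul h1 hEm h2 hE0.le
    have hfin : c * N * (c * (d : ℝ) ^ 2 * N / 32) ≤ c * N * (T : ℝ) := by nlinarith
    exact le_of_mul_le_mul_left hfin hcN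
  -- conclude by contradiction
  by_contra hcon
  push_neg at hcon
  have hcn_eq : ∀ v u : V, (G.neighborSet v ∩ G.neighborSet u).ncard = cn v u := by
    intro v u
    have hseteq : G.neighborSet v ∩ G.neighborSet u
        = ↑(univ.filter fun a => G.Adj a v ∧ G.Adj a u) := by
      ext a
      simp [SimpleGraph.mem_neighborSet, G.adj_comm]
    rw [hseteq, Set.ncard_coe_finset, hcn]
  have hT0 : (0 : ℝ) < (T : ℝ) := by
    have : (0 : ℝ) < c * (d : ℝ) ^ 2 * N / 32 := by positivity
    linarith
  have hne : B2.offDiag.Nonempty := by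
    rcases Finset.eq_empty_or_nonempty B2.offDiag with h | h
    · rw [hT, h, Finset.sum_empty] at hT0; norm_num at hT0
    · exact h
  set K : ℝ := c * (d : ℝ) ^ 2 * N ^ ((2 : ℝ)⁻¹) / 32 with hK
  have hrpow_nonneg : (0 : ℝ) ≤ N ^ ((2 : ℝ)⁻¹) := Real.rpow_nonneg hN0.le _
  have hK0 : 0 ≤ K := by
    rw [hK]
    apply div_nonneg _ (by norm_num)
    exact mul_nonneg (mul_nonneg hc0.le (sq_nonneg _)) hrpow_nonneg
  have hmem : ∀ p ∈ B2.offDiag, ((cn p.1 p.2 : ℕ) : ℝ) < K := by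
    intro p hp
    rw [Finset.mem_offDiag] at hp
    obtain ⟨h1, h2, h3⟩ := hp
    rw [hB2def, Finset.mem_filter] at h1 h2
    have h4 := hcon p.1 h1.2 p.2 h2.2 h3
    rwa [hcn_eq] at h4
  have hTK : (T : ℝ) < (B2.offDiag.card : ℝ) * K := by
    have hTsum : (T : ℝ) = ∑ p ∈ B2.offDiag, ((cn p.1 p.2 : ℕ) : ℝ) := by
      rw [hT]; exact Nat.cast_sum _ _
    rw [hTsum]
    calc ∑ p ∈ B2.offDiag, ((cn p.1 p.2 : ℕ) : ℝ)
        < ∑ _p ∈ B2.offDiag, K := Finset.sum_lt_sum_of_nonempty hne hmem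
      _ = (B2.offDiag.card : ℝ) * K := by rw [Finset.sum_const, nsmul_eq_mul]
  -- |B₂| bound
  have hm : (B2.card : ℝ) ≤ N ^ ((4 : ℝ)⁻¹) := by
    have hBeq : B₂ = ↑B2 := by ext a; simp [hB2def]
    rw [hBeq, Set.ncard_coe_finset] at hB₂card
    exact hB₂card
  have hm0 : (0 : ℝ) ≤ (B2.card : ℝ) := Nat.cast_nonneg _
  have hoffcard : (B2.offDiag.card : ℝ) ≤ (B2.card : ℝ) * (B2.card : ℝ) := by
    have h5 : B2.offDiag.card ≤ B2.card * B2.card := by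
      rw [Finset.offDiag_card]; omega
    exact_mod_cast h5
  have hsq : (B2.card : ℝ) * (B2.card : ℝ) ≤ N ^ ((2 : ℝ)⁻¹) := by
    have h1 : (B2.card : ℝ) * (B2.card : ℝ) ≤ N ^ ((4 : ℝ)⁻¹) * N ^ ((4 : ℝ)⁻¹) :=
      mul_le_mul hm hm hm0 (Real.rpow_nonneg hN0.le _)
    have h2 : N ^ ((4 : ℝ)⁻¹) * N ^ ((4 : ℝ)⁻¹) = N ^ ((2 : ℝ)⁻¹) := by
      rw [← Real.rpow_add hN0]; norm_num
    linarith
  have hhalf : N ^ ((2 : ℝ)⁻¹) * N ^ ((2 : ℝ)⁻¹) = N := by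
    rw [← Real.rpow_add hN0]; norm_num
  have hfinal : (T : ℝ) < c * (d : ℝ) ^ 2 * N / 32 := by
    calc (T : ℝ) < (B2.offDiag.card : ℝ) * K := hTK
      _ ≤ N ^ ((2 : ℝ)⁻¹) * K :=
          mul_le_mul_of_nonneg_right (le_trans hoffcard hsq) hK0
      _ = c * (d : ℝ) ^ 2 * (N ^ ((2 : ℝ)⁻¹) * N ^ ((2 : ℝ)⁻¹)) / 32 := by rw [hK]; ring
      _ = c * (d : ℝ) ^ 2 * N / 32 := by rw [hhalf]
  linarith
end
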